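/- arXiv:2401.07357 — 10 statements merged into one kernel-verified Lean document; each statement's English description precedes it below -/
import Mathlib

section
/- Let m ≥ 4 and n ≥ m(m-1)/2 be integers. Then RS_m(n) ≥ ⌈((m-3)n + m(m-1)/2)/(m-2)⌉. -/
open Finset in
/-- `χ` is an exact `r`-coloring of `[1,n]`: it maps `[1,n]` into the color set `[1,r]`
and uses all `r` colors. -/
def ExactColoring (n r : ℕ) (χ : ℕ → ℕ) : Prop :=
  (∀ x ∈ Finset.Icc 1 n, χ x ∈ Finset.Icc 1 r) ∧
  ∀ c ∈ Finset.Icc 1 r, ∃ x ∈ Finset.Icc 1 n, χ x = c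

open Finset in
/-- The tuple `a 1, …, a m` is a solution to `E_m : x₁ + ⋯ + x_{m-1} = x_m` within `[1,n]`
(repetitions among the entries are allowed). -/
def IsSolutionEm (m n : ℕ) (a : ℕ → ℕ) : Prop :=
  (∀ i ∈ Finset.Icc 1 m, a i ∈ Finset.Icc 1 n) ∧
  ∑ i ∈ Finset.Icc 1 (m - 1), a i = a m

open Finset in
/-- The solution `a 1, …, a m` is rainbow under `χ`: its colors are pairwise distinct. -/
def IsRainbow (m : ℕ) (χ a : ℕ → ℕ) : Prop :=
  ∀ i ∈ Finset.Icc 1 m, ∀ j ∈ Finset.Icc 1 m, i ≠ j → χ (a i) ≠ χ (a j)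

open Finset in
/-- The number of distinct colors used by the tuple `a 1, …, a m` under `χ`. -/
def colorsUsed (m : ℕ) (χ a : ℕ → ℕ) : ℕ :=
  ((Finset.Icc 1 m).image fun i => χ (a i)).card

/-- Every exact `r`-coloring of `[1,n]` contains a rainbow solution to `E_m`. -/
def HasRainbowProp (m n r : ℕ) : Prop :=
  ∀ χ : ℕ → ℕ, ExactColoring n r χ →
    ∃ a : ℕ → ℕ, IsSolutionEm m n a ∧ IsRainbow m χ a

/-- Every exact `r`-coloring of `[1,n]` contains a solution to `E_m` using at least `t` colors. -/
def HasWeakProp (m t n r : ℕ) : Prop :=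
  ∀ χ : ℕ → ℕ, ExactColoring n r χ →
    ∃ a : ℕ → ℕ, IsSolutionEm m n a ∧ t ≤ colorsUsed m χ a

lemma tri_le_sum (k : ℕ) (s : Finset ℕ) :
    (∀ x ∈ s, k < x) → s.card * (2*k + s.card + 1) ≤ 2 * ∑ x ∈ s, x := by
  induction s using Finset.strongInduction with
  | _ s ih =>
    intro h
    rcases s.eq_empty_or_nonempty with rfl | hs
    · simp
    · have hM : s.max' hs ∈ s := s.max'_mem hs
      have ih' := ih _ (Finset.erase_ssubset hM) (fun x hx => h x (Finset.mem_of_mem_erase hx))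
      have hcard : (s.erase (s.max' hs)).card = s.card - 1 := Finset.card_erase_of_mem hM
      have hpos : 1 ≤ s.card := hs.card_pos
      have hMlarge : k + s.card ≤ s.max' hs := by
        have hsub : s ⊆ Finset.Icc (k+1) (s.max' hs) := fun x hx =>
          Finset.mem_Icc.mpr ⟨h x hx, Finset.le_max' s x hx⟩
        have := Finset.card_le_card hsub
        rw [Nat.card_Icc] at this
        omega
      have hsum : ∑ x ∈ s, x = s.max' hs + ∑ x ∈ s.erase (s.max' hs), x :=
        (Finset.add_sum_erase s _ hM).symm
      have hc : s.card = (s.erase (s.max' hs)).card + 1 := by omega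
      rw [hsum, hc]
      nlinarith [ih', hMlarge]

lemma arith_a (p n r k : ℕ) (hkey : 2*((p+2)*r) < 2*((p+1)*n) + (p+4)*(p+3))
    (hk : k + r = n + 1) : 2*n + 1 ≤ (p+2)*(2*k+(p+2)+1) + 2 := by
  have h2 : (p+2)*(k+r) = (p+2)*(n+1) := by rw [hk]
  nlinarith [hkey, h2]

lemma arith_b (p n r k : ℕ) (hkey : 2*((p+2)*r) < 2*((p+1)*n) + (p+4)*(p+3))
    (hk : k + r = n + 1) (hk1 : 1 ≤ k) : 2*n + 1 ≤ (p+3)*(2*k+(p+3)+1) := by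
  have h2 : (p+2)*(k+r) = (p+2)*(n+1) := by rw [hk]
  nlinarith [hkey, h2, hk1]

/-- For m ≥ 4 and n ≥ m(m-1)/2, the rainbow Schur number satisfies
RS_m(n) ≥ ⌈((m-3)n + m(m-1)/2)/(m-2)⌉; i.e. any number of colors r (with at least one color)
such that every exact r-coloring of [1,n] contains a rainbow solution to E_m is at least
this ceiling. -/
theorem rainbow_schur_lower_bound (m n : ℕ) (hm : 4 ≤ m) (hn : m * (m - 1) / 2 ≤ n)
    (r : ℕ) (hr : 1 ≤ r) (hprop : HasRainbowProp m n r) :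
    ⌈(((m : ℚ) - 3) * n + (m : ℚ) * ((m : ℚ) - 1) / 2) / ((m : ℚ) - 2)⌉ ≤ (r : ℤ) := by
  by_contra hlt
  push_neg at hlt
  obtain ⟨p, rfl⟩ : ∃ p, m = p + 4 := ⟨m - 4, by omega⟩
  have hq : ((r : ℤ) : ℚ) < ((((p+4 : ℕ) : ℚ) - 3) * n + ((p+4 : ℕ) : ℚ) * (((p+4 : ℕ):ℚ) - 1) / 2) / (((p+4 : ℕ):ℚ) - 2) := Int.lt_ceil.mp hlt
  have hm2 : (0:ℚ) < ((p+4 : ℕ) : ℚ) - 2 := by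
    push_cast
    have : (0:ℚ) ≤ (p:ℚ) := Nat.cast_nonneg p
    linarith
  rw [lt_div_iff₀ hm2] at hq
  push_cast at hq
  -- key integer inequality
  have hkeyN : 2*((p+2)*r) < 2*((p+1)*n) + (p+4)*(p+3) := by
    have : ((2*((p+2)*r) : ℕ) : ℚ) < ((2*((p+1)*n) + (p+4)*(p+3) : ℕ) : ℚ) := by
      push_cast
      nlinarith [hq]
    exact_mod_cast this
  have hn' : (p+4)*(p+3)/2 ≤ n := by simpa using hn
  have hq2n : (p+4)*(p+3) ≤ 2*n + 1 := by
    generalize hQ : (p+4)*(p+3) = Q at hn' ⊢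
    omega
  have hrn : r ≤ n := by nlinarith [hkeyN, hq2n]
  set k : ℕ := n + 1 - r with hkdef
  have hk : k + r = n + 1 := by omega
  have hk1 : 1 ≤ k := by omega
  -- the coloring
  set χ : ℕ → ℕ := fun x => if x ≤ k then 1 else x - k + 1 with hχ
  have hexact : ExactColoring n r χ := by
    constructor
    · intro x hx
      rw [Finset.mem_Icc] at hx ⊢
      by_cases h : x ≤ k
      · simp only [hχ, if_pos h]; omega
      · simp only [hχ, if_neg h]; omega
    · intro c hc
      rw [Finset.mem_Icc] at hc
      by_cases h : c = 1
      · exact ⟨1, Finset.mem_Icc.mpr ⟨le_refl 1, by omega⟩, by simp only [hχ, if_pos hk1]; omega⟩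
      · refine ⟨k + c - 1, Finset.mem_Icc.mpr ⟨by omega, by omega⟩, ?_⟩
        simp only [hχ, if_neg (by omega : ¬ (k + c - 1 ≤ k))]
        omega
  obtain ⟨a, hsol, hrb⟩ := hprop χ hexact
  have hmem : ∀ i ∈ Finset.Icc 1 (p+4), 1 ≤ a i ∧ a i ≤ n := by
    intro i hi
    have := hsol.1 i hi
    rw [Finset.mem_Icc] at this
    exact this
  have ham : a (p+4) ≤ n := (hmem (p+4) (Finset.mem_Icc.mpr ⟨by omega, le_refl _⟩)).2
  have hsum : ∑ i ∈ Finset.Icc 1 (p+3), a i = a (p+4) := by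
    have := hsol.2
    simpa using this
  set S : Finset ℕ := Finset.Icc 1 (p+3) with hS
  have hSsub : ∀ i ∈ S, i ∈ Finset.Icc 1 (p+4) := by
    intro i hi
    rw [hS, Finset.mem_Icc] at hi
    rw [Finset.mem_Icc]
    omega
  have hScard : S.card = p + 3 := by rw [hS, Nat.card_Icc]; omega
  set T : Finset ℕ := S.filter (fun i => k < a i) with hT
  -- at most one small element
  have hsmall : (S.filter (fun i => ¬ k < a i)).card ≤ 1 := by
    rw [Finset.card_le_one]
    intro i hi j hj
    rw [Finset.mem_filter] at hi hj
    by_contra hij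
    have h1 : χ (a i) = 1 := by simp only [hχ]; rw [if_pos (by omega)]
    have h2 : χ (a j) = 1 := by simp only [hχ]; rw [if_pos (by omega)]
    exact hrb i (hSsub i hi.1) j (hSsub j hj.1) hij (h1.trans h2.symm)
  have hScnt : T.card + (S.filter (fun i => ¬ k < a i)).card = S.card := by
    have := Finset.card_filter_add_card_filter_not (s := S) (p := fun i => k < a i)
    rw [← hT] at this
    exact this
  have hTcard : p + 2 ≤ T.card ∧ T.card ≤ p + 3 := by omega
  -- injectivity of a on T
  have hinj : ∀ x ∈ T, ∀ y ∈ T, a x = a y → x = y := by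
    intro x hx y hy hxy
    by_contra hne
    exact hrb x (hSsub x (Finset.mem_of_mem_filter x hx)) y
      (hSsub y (Finset.mem_of_mem_filter y hy)) hne (by rw [hxy])
  set Y : Finset ℕ := T.image a with hY
  have hYcard : Y.card = T.card := Finset.card_image_of_injOn hinj
  have hYbig : ∀ x ∈ Y, k < x := by
    intro x hx
    rw [hY, Finset.mem_image] at hx
    obtain ⟨i, hi, rfl⟩ := hx
    rw [hT, Finset.mem_filter] at hi
    exact hi.2
  have hYsum : ∑ x ∈ Y, x = ∑ i ∈ T, a i := Finset.sum_image hinj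
  have htri := tri_le_sum k Y hYbig
  rw [hYcard, hYsum] at htri
  -- small part sum at least its card
  have hsmallsum : (S.filter (fun i => ¬ k < a i)).card ≤ ∑ i ∈ S.filter (fun i => ¬ k < a i), a i := by
    have := Finset.card_nsmul_le_sum (S.filter (fun i => ¬ k < a i)) a 1
      (fun i hi => (hmem i (hSsub i (Finset.mem_of_mem_filter i hi))).1)
    simpa using this
  have hsplit : ∑ i ∈ T, a i + ∑ i ∈ S.filter (fun i => ¬ k < a i), a i = ∑ i ∈ S, a i :=
    Finset.sum_filter_add_sum_filter_not S _ a
  -- final contradiction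
  have hfinal : 2 * ∑ i ∈ S, a i ≤ 2 * n := by
    rw [hsum]; omega
  -- case on T.card
  have hcases : T.card = p + 2 ∨ T.card = p + 3 := by omega
  rcases hcases with h | h
  · rw [h] at htri
    have hu : (S.filter (fun i => ¬ k < a i)).card = 1 := by omega
    have hlin : (p+2)*(2*k+(p+2)+1) + 2 ≤ 2 * ∑ i ∈ S, a i := by omega
    have harith := arith_a p n r k hkeyN hk
    omega
  · rw [h] at htri
    have hlin : (p+3)*(2*k+(p+3)+1) ≤ 2 * ∑ i ∈ S, a i := by omega
    have harith := arith_b p n r k hkeyN hk hk1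
    omega
end

section
/- Let m ≥ 4 and n ≥ m(m-1)/2 be integers, and set k = n + 2 − ⌈((m-3)n + m(m-1)/2)/(m-2)⌉. If a₁ < a₂ < ⋯ < a_{m-1} are integers in [1,n] with a₁ + a₂ + ⋯ + a_{m-1} = a_m for some a_m ∈ [1,n], then a₂ ≤ k. -/
/-- Let m ≥ 4 and n ≥ m(m-1)/2, and set
k = n + 2 − ⌈((m-3)n + m(m-1)/2)/(m-2)⌉. If a₁ < a₂ < ⋯ < a_{m-1} are integers in [1,n]
with a₁ + ⋯ + a_{m-1} = a_m for some a_m ∈ [1,n], then a₂ ≤ k. -/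
theorem second_summand_le_k (m n : ℕ) (hm : 4 ≤ m) (hn : m * (m - 1) / 2 ≤ n)
    (a : ℕ → ℕ)
    (hmem : ∀ i ∈ Finset.Icc 1 m, a i ∈ Finset.Icc 1 n)
    (hmono : ∀ i : ℕ, 1 ≤ i → i ≤ m - 2 → a i < a (i + 1))
    (hsum : ∑ i ∈ Finset.Icc 1 (m - 1), a i = a m) :
    (a 2 : ℤ) ≤ (n : ℤ) + 2 -
      ⌈(((m : ℚ) - 3) * n + (m : ℚ) * ((m : ℚ) - 1) / 2) / ((m : ℚ) - 2)⌉ := by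
  have hm2 : 2 ≤ m := by omega
  have hm3 : 3 ≤ m := by omega
  -- chain inequality
  have hchain : ∀ i, 2 ≤ i → i ≤ m - 1 → a 2 + (i - 2) ≤ a i := by
    intro i
    induction i with
    | zero => omega
    | succ j ih =>
      intro h2 hle
      rcases Nat.lt_or_ge j 2 with hj | hj
      · have : j = 1 := by omega
        subst this; simp
      · have h1 := ih hj (by omega)
        have h2' := hmono j (by omega) (by omega)
        omega
  have hsum2 : ∑ i ∈ Finset.Icc 2 (m - 1), (a 2 + (i - 2)) ≤ ∑ i ∈ Finset.Icc 2 (m - 1), a i :=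
    Finset.sum_le_sum fun i hi =>
      hchain i (Finset.mem_Icc.mp hi).1 (Finset.mem_Icc.mp hi).2
  have hins : Finset.Icc 1 (m - 1) = insert 1 (Finset.Icc 2 (m - 1)) := by
    ext x; simp [Finset.mem_Icc]; omega
  have hsplit : a 1 + ∑ i ∈ Finset.Icc 2 (m - 1), a i = ∑ i ∈ Finset.Icc 1 (m - 1), a i := by
    rw [hins, Finset.sum_insert (by simp)]
  have hIco : Finset.Icc 2 (m - 1) = Finset.Ico 2 m := by
    rw [← Finset.Ico_add_one_right_eq_Icc]; congr 1; omega
  have hcalc : ∑ i ∈ Finset.Icc 2 (m - 1), (a 2 + (i - 2))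
      = (m - 2) * a 2 + ∑ j ∈ Finset.range (m - 2), j := by
    rw [hIco, Finset.sum_Ico_eq_sum_range]
    have h2i : ∀ i, a 2 + (2 + i - 2) = a 2 + i := fun i => by omega
    simp only [h2i]
    rw [Finset.sum_add_distrib, Finset.sum_const, Finset.card_range, smul_eq_mul]
  have hgauss : (∑ j ∈ Finset.range (m - 2), j) * 2 = (m - 2) * (m - 3) := by
    rw [Finset.sum_range_id_mul_two]; congr 1
  have ha1 : 1 ≤ a 1 := by
    have := hmem 1 (by simp; omega)
    simp [Finset.mem_Icc] at this; exact this.1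
  have ham : a m ≤ n := by
    have := hmem m (by simp; omega)
    simp [Finset.mem_Icc] at this; exact this.2
  have hkey : 2 + 2 * ((m - 2) * a 2) + (m - 2) * (m - 3) ≤ 2 * n := by
    have h1 : (m - 2) * a 2 + ∑ j ∈ Finset.range (m - 2), j ≤ ∑ i ∈ Finset.Icc 2 (m - 1), a i := by
      rw [← hcalc]; exact hsum2
    have h2 : a 1 + ∑ i ∈ Finset.Icc 2 (m - 1), a i ≤ n := by
      rw [hsplit, hsum]; exact ham
    set P := (m - 2) * a 2
    set T := ∑ j ∈ Finset.range (m - 2), j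
    set S := ∑ i ∈ Finset.Icc 2 (m - 1), a i
    set Q := (m - 2) * (m - 3)
    omega
  have hceil : ⌈(((m : ℚ) - 3) * n + (m : ℚ) * ((m : ℚ) - 1) / 2) / ((m : ℚ) - 2)⌉
      ≤ (n : ℤ) + 2 - a 2 := by
    rw [Int.ceil_le]
    have hmpos : (0 : ℚ) < (m : ℚ) - 2 := by
      have : (4 : ℚ) ≤ (m : ℚ) := by exact_mod_cast hm
      linarith
    rw [div_le_iff₀ hmpos]
    push_cast
    have hkeyQ : (2 : ℚ) + 2 * (((m : ℚ) - 2) * a 2) + ((m : ℚ) - 2) * ((m : ℚ) - 3)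
        ≤ 2 * n := by
      have h := (Nat.cast_le (α := ℚ)).mpr hkey
      push_cast [Nat.cast_sub hm2, Nat.cast_sub hm3] at h
      linarith
    nlinarith [hkeyQ]
  omega
end

section
/- Let m ≥ 4 and n ≥ m(m-1)/2 be integers, and set k = n + 2 − ⌈((m-3)n + m(m-1)/2)/(m-2)⌉. Define a coloring χ of [1,n] that assigns one common color to every element of [1,k] and assigns to each element of [k+1,n] its own unique color different from the common color. Then χ is an exact (n−k+1)-coloring of [1,n], it uses exactly ⌈((m-3)n + m(m-1)/2)/(m-2)⌉ − 1 colors, and [1,n] contains no rainbow solution to E_m under χ. -/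
lemma sum_distinct_lower (t : ℕ) : ∀ (s : Finset ℕ) (K : ℕ), s.card = t →
    (∀ x ∈ s, K < x) → ∑ i ∈ Finset.range t, (K + 1 + i) ≤ ∑ x ∈ s, x := by
  induction t with
  | zero => intro s K _ _; simp
  | succ t ih =>
    intro s K hcard h
    have hne : s.Nonempty := Finset.card_pos.mp (by omega)
    obtain ⟨x, hx, hmin⟩ := s.exists_min_image id hne
    have hcard' : (s.erase x).card = t := by rw [Finset.card_erase_of_mem hx, hcard]; omega
    have h' : ∀ y ∈ s.erase x, K + 1 < y := by
      intro y hy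
      have h1 := hmin y (Finset.mem_of_mem_erase hy)
      have h2 := Finset.ne_of_mem_erase hy
      have h3 := h x hx
      simp only [id] at h1
      omega
    have hIH := ih (s.erase x) (K + 1) hcard' h'
    have hIH' : ∑ i ∈ Finset.range t, (K + 1 + (i + 1)) ≤ ∑ y ∈ s.erase x, y := by
      calc ∑ i ∈ Finset.range t, (K + 1 + (i + 1))
          = ∑ i ∈ Finset.range t, (K + 1 + 1 + i) := by
            apply Finset.sum_congr rfl; intro i _; omega
        _ ≤ _ := hIH
    have hsplit : x + ∑ y ∈ s.erase x, y = ∑ y ∈ s, y := Finset.add_sum_erase s id hx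
    rw [Finset.sum_range_succ']
    have hx1 := h x hx
    omega



/-- Let m ≥ 4, n ≥ m(m-1)/2, and
K = n + 2 − ⌈((m-3)n + m(m-1)/2)/(m-2)⌉. The coloring of [1,n] that gives all of [1,K]
the common color 1 and gives each x ∈ [K+1,n] its own unique color x − K + 1 is an exact
(n − K + 1)-coloring, it uses exactly ⌈((m-3)n + m(m-1)/2)/(m-2)⌉ − 1 colors, and it admits
no rainbow solution to E_m. -/
theorem blockColoring_no_rainbow (m n K : ℕ) (hm : 4 ≤ m) (hn : m * (m - 1) / 2 ≤ n)
    (hK : (K : ℤ) = (n : ℤ) + 2 -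
      ⌈(((m : ℚ) - 3) * n + (m : ℚ) * ((m : ℚ) - 1) / 2) / ((m : ℚ) - 2)⌉) :
    ExactColoring n (n - K + 1) (fun x => if x ≤ K then 1 else x - K + 1) ∧
    ((n - K + 1 : ℕ) : ℤ) =
      ⌈(((m : ℚ) - 3) * n + (m : ℚ) * ((m : ℚ) - 1) / 2) / ((m : ℚ) - 2)⌉ - 1 ∧
    ¬ ∃ a : ℕ → ℕ, IsSolutionEm m n a ∧
        IsRainbow m (fun x => if x ≤ K then 1 else x - K + 1) a := by
  have hm1 : 1 ≤ m := by omega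
  set q : ℚ := (((m : ℚ) - 3) * n + (m : ℚ) * ((m : ℚ) - 1) / 2) / ((m : ℚ) - 2) with hq
  set C : ℤ := ⌈q⌉ with hCdef
  have hmQ : (4:ℚ) ≤ (m:ℚ) := by exact_mod_cast hm
  have hden : (0:ℚ) < (m:ℚ) - 2 := by linarith
  have heven : Even (m * (m - 1)) := by
    have := Nat.even_mul_succ_self (m - 1)
    have h1 : m - 1 + 1 = m := by omega
    rw [h1, mul_comm] at this
    exact this
  have hn2 : m * (m - 1) ≤ 2 * n := by
    obtain ⟨e, he⟩ := heven
    omega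
  have hn2z : (m:ℤ) * ((m:ℤ) - 1) ≤ 2 * (n:ℤ) := by zify [hm1] at hn2; linarith
  have hn2' : (m:ℚ) * ((m:ℚ) - 1) ≤ 2 * (n:ℚ) := by exact_mod_cast hn2z
  have hub : q ≤ (n:ℚ) := by
    rw [hq, div_le_iff₀ hden]; nlinarith [hn2']
  have hCn : C ≤ (n:ℤ) := Int.ceil_le.mpr (by push_cast; exact hub)
  have hlb : (2:ℚ) ≤ q := by
    rw [hq, le_div_iff₀ hden]
    nlinarith [hn2', Nat.cast_nonneg (α := ℚ) n,
      mul_nonneg (by linarith : (0:ℚ) ≤ (m:ℚ) - 4) (Nat.cast_nonneg (α := ℚ) n),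
      sq_nonneg ((m:ℚ) - 2)]
  have hC2 : (2:ℤ) ≤ C := by
    have h1 := Int.le_ceil q
    have h2 : ((2:ℤ):ℚ) ≤ (C:ℚ) := by push_cast; linarith
    exact_mod_cast h2
  have hKn : K ≤ n := by omega
  have hK2 : 2 ≤ K := by omega
  -- key inequality
  have hceil : (C:ℚ) < q + 1 := Int.ceil_lt_add_one q
  have hZq : ((C:ℚ) - 1) * ((m:ℚ) - 2) < ((m:ℚ) - 3) * n + (m:ℚ) * ((m:ℚ) - 1) / 2 := by
    have h1 : (C:ℚ) - 1 < q := by linarith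
    rw [hq] at h1
    exact (lt_div_iff₀ hden).mp h1
  have hZ : (C - 1) * ((m:ℤ) - 2) * 2 < 2 * ((m:ℤ) - 3) * (n:ℤ) + (m:ℤ) * ((m:ℤ) - 1) := by
    have h1 : (((C - 1) * ((m:ℤ) - 2) * 2 : ℤ) : ℚ) <
        ((2 * ((m:ℤ) - 3) * (n:ℤ) + (m:ℤ) * ((m:ℤ) - 1) : ℤ) : ℚ) := by
      push_cast; linarith
    exact_mod_cast h1
  obtain ⟨e, he⟩ : Even (((m:ℤ) - 1) * ((m:ℤ) - 2)) := by
    have h1 := Int.even_mul_succ_self ((m:ℤ) - 2)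
    rwa [show ((m:ℤ) - 2) * (((m:ℤ) - 2) + 1) = ((m:ℤ) - 1) * ((m:ℤ) - 2) by ring] at h1
  have hkey : (n:ℤ) - e ≤ ((m:ℤ) - 2) * K := by
    have h5 : 2 * (n:ℤ) - (e + e) - 1 ≤ 2 * (((m:ℤ) - 2) * K) := by
      rw [← he]; nlinarith [hZ, hK]
    obtain ⟨p, hp⟩ : ∃ p : ℤ, ((m:ℤ) - 2) * (K:ℤ) = p := ⟨_, rfl⟩
    rw [hp] at h5 ⊢
    omega
  refine ⟨⟨?_, ?_⟩, ?_, ?_⟩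
  · intro x hx
    simp only [Finset.mem_Icc] at hx ⊢
    split <;> omega
  · intro c hc
    simp only [Finset.mem_Icc] at hc
    by_cases h1 : c = 1
    · refine ⟨1, ?_, ?_⟩
      · simp only [Finset.mem_Icc]; omega
      · simp only [if_pos (show (1:ℕ) ≤ K by omega)]; omega
    · refine ⟨K + c - 1, ?_, ?_⟩
      · simp only [Finset.mem_Icc]; omega
      · simp only [if_neg (show ¬ (K + c - 1 ≤ K) by omega)]; omega
  · have h1 : ((n - K + 1 : ℕ) : ℤ) = (n:ℤ) - K + 1 := by omega
    rw [h1]; omega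
  · rintro ⟨a, ⟨hmem, hsum⟩, hrb⟩
    have hmIcc : m ∈ Finset.Icc 1 m := by simp only [Finset.mem_Icc]; omega
    have ham : a m ≤ n := by
      have := hmem m hmIcc
      simp only [Finset.mem_Icc] at this
      exact this.2
    obtain ⟨B, hBdef⟩ : ∃ B, B = (Finset.Icc 1 (m - 1)).filter (fun i => K < a i) := ⟨_, rfl⟩
    obtain ⟨Bc, hBcdef⟩ : ∃ Bc, Bc = (Finset.Icc 1 (m - 1)).filter (fun i => ¬ K < a i) :=
      ⟨_, rfl⟩
    obtain ⟨t, ht⟩ : ∃ t, t = B.card := ⟨_, rfl⟩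
    have hsub : ∀ i ∈ Finset.Icc 1 (m - 1), i ∈ Finset.Icc 1 m := by
      intro i hi; simp only [Finset.mem_Icc] at hi ⊢; omega
    have hcardIcc : (Finset.Icc 1 (m - 1)).card = m - 1 := by rw [Nat.card_Icc]; omega
    have htle : t ≤ m - 1 := by
      rw [ht, hBdef]; exact (Finset.card_filter_le _ _).trans (le_of_eq hcardIcc)
    have hBmem : ∀ i ∈ B, i ∈ Finset.Icc 1 (m - 1) ∧ K < a i := by
      intro i hi; rw [hBdef] at hi; exact Finset.mem_filter.mp hi
    have hBc1 : Bc.card ≤ 1 := by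
      rw [Finset.card_le_one]
      intro i hi j hj
      rw [hBcdef] at hi hj
      simp only [Finset.mem_filter] at hi hj
      by_contra hij
      exact hrb i (hsub i hi.1) j (hsub j hj.1) hij
        (by simp only [if_pos (show a i ≤ K by omega), if_pos (show a j ≤ K by omega)])
    have hfc : B.card + Bc.card = m - 1 := by
      have h0 := Finset.card_filter_add_card_filter_not
        (s := Finset.Icc 1 (m - 1)) (p := fun i => K < a i)
      rw [hcardIcc] at h0
      rw [hBdef, hBcdef]
      exact h0
    have htge : m - 2 ≤ t := by omega
    have hinj : ∀ i ∈ B, ∀ j ∈ B, a i = a j → i = j := by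
      intro i hi j hj hij
      by_contra hne
      exact hrb i (hsub i (hBmem i hi).1) j (hsub j (hBmem j hj).1) hne (by rw [hij])
    have hVcard : (B.image a).card = t := by rw [ht]; exact Finset.card_image_of_injOn hinj
    have hVmem : ∀ v ∈ B.image a, K < v := by
      intro v hv
      obtain ⟨i, hi, rfl⟩ := Finset.mem_image.mp hv
      exact (hBmem i hi).2
    have hlow : ∑ i ∈ Finset.range t, (K + 1 + i) ≤ ∑ v ∈ B.image a, v :=
      sum_distinct_lower t _ K hVcard hVmem
    have hsumV : ∑ v ∈ B.image a, v = ∑ i ∈ B, a i := Finset.sum_image hinj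
    have hsplit : ∑ i ∈ B, a i + ∑ i ∈ Bc, a i = ∑ i ∈ Finset.Icc 1 (m - 1), a i := by
      rw [hBdef, hBcdef]
      exact Finset.sum_filter_add_sum_filter_not (Finset.Icc 1 (m - 1)) (fun i => K < a i) a
    have hBcsum : (m - 1) - t ≤ ∑ i ∈ Bc, a i := by
      have hone : ∀ i ∈ Bc, 1 ≤ a i := by
        intro i hi
        rw [hBcdef] at hi
        have := hmem i (hsub i (Finset.mem_filter.mp hi).1)
        simp only [Finset.mem_Icc] at this
        exact this.1
      calc (m - 1) - t = Bc.card • 1 := by rw [smul_eq_mul, mul_one]; omega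
        _ ≤ _ := Finset.card_nsmul_le_sum _ _ _ hone
    have hS : ∑ i ∈ Finset.range t, (K + 1 + i) = t * (K + 1) + ∑ i ∈ Finset.range t, i := by
      rw [Finset.sum_add_distrib, Finset.sum_const, smul_eq_mul, Finset.card_range]
    have hS2 := Finset.sum_range_id_mul_two t
    have htotal : t * (K + 1) * 2 + t * (t - 1) + 2 * ((m - 1) - t) ≤ 2 * n := by
      have h1 : ∑ i ∈ B, a i + ((m - 1) - t) ≤ a m := by
        rw [← hsum, ← hsplit]
        exact Nat.add_le_add_left hBcsum _
      have h2 : t * (K + 1) + ∑ i ∈ Finset.range t, i + ((m - 1) - t) ≤ n := by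
        calc t * (K + 1) + ∑ i ∈ Finset.range t, i + ((m - 1) - t)
            = ∑ i ∈ Finset.range t, (K + 1 + i) + ((m - 1) - t) := by rw [hS]
          _ ≤ ∑ v ∈ B.image a, v + ((m - 1) - t) := Nat.add_le_add_right hlow _
          _ = ∑ i ∈ B, a i + ((m - 1) - t) := by rw [hsumV]
          _ ≤ a m := h1
          _ ≤ n := ham
      omega
    have h1t : 1 ≤ t := by omega
    zify [h1t, htle, hm1] at htotal
    have htge' : (m:ℤ) - 2 ≤ (t:ℤ) := by
      have h3 : ((m - 2 : ℕ) : ℤ) ≤ (t:ℤ) := by exact_mod_cast htge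
      omega
    have hK2' : (2:ℤ) ≤ (K:ℤ) := by exact_mod_cast hK2
    have hm' : (4:ℤ) ≤ (m:ℤ) := by exact_mod_cast hm
    have hint : (0:ℤ) ≤ ((t:ℤ) - ((m:ℤ) - 2)) * (2 * (K:ℤ) + (t:ℤ) + ((m:ℤ) - 2) - 1) := by
      apply mul_nonneg
      · linarith
      · have h4 : (0:ℤ) ≤ (t:ℤ) := by positivity
        linarith
    clear_value q C
    linarith only [htotal, hkey, he, hint, htge', hK2', hm']
end

section
/- Let m ≥ 4 and n ≥ m(m-1)/2 be integers. Then RS_m(n) = ⌈((m-3)n + m(m-1)/2)/(m-2)⌉. -/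
open Finset

namespace Finset

lemma card_mul_le_two_mul_sum_of_forall_gt (P : Finset ℕ) {L : ℕ} (hP : ∀ x ∈ P, L < x) :
    #P * (2 * L + #P + 1) ≤ 2 * ∑ x ∈ P, x := by
  induction P using Finset.induction_on_min generalizing L with
  | empty => simp
  | insert a P ha ih =>
    have haP : a ∉ P := fun h => lt_irrefl a (ha a h)
    have hLa : L < a := hP a (mem_insert_self a P)
    have := ih ha
    rw [card_insert_of_notMem haP, sum_insert haP]
    nlinarith

lemma two_mul_sum_add_le_of_forall_lt (P : Finset ℕ) {L : ℕ} (hP : ∀ x ∈ P, x < L) :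
    2 * ∑ x ∈ P, x + #P * (#P + 1) ≤ 2 * #P * L := by
  induction P using Finset.induction_on_max generalizing L with
  | empty => simp
  | insert a P ha ih =>
    have haP : a ∉ P := fun h => lt_irrefl a (ha a h)
    have haL : a < L := hP a (mem_insert_self a P)
    have := ih ha
    rw [card_insert_of_notMem haP, sum_insert haP]
    nlinarith

lemma exists_le_card_filter_lt_eq (s : Finset ℕ) {k b : ℕ} (h : k ≤ #(s.filter (· < b))) :
    ∃ t ≤ b, #(s.filter (· < t)) = k := by
  induction b with
  | zero => exact ⟨0, le_rfl, by simp_all⟩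
  | succ b ih =>
    by_cases hb : k ≤ #(s.filter (· < b))
    · obtain ⟨t, htb, ht⟩ := ih hb
      exact ⟨t, htb.trans b.le_succ, ht⟩
    · refine ⟨b + 1, le_rfl, le_antisymm ?_ h⟩
      have hsub : s.filter (· < b + 1) ⊆ insert b (s.filter (· < b)) := by
        intro x hx
        rw [mem_filter] at hx
        rw [mem_insert, mem_filter]
        by_cases hxb : x = b
        · exact Or.inl hxb
        · exact Or.inr ⟨hx.1, by omega⟩
      have := (card_le_card hsub).trans (card_insert_le _ _)
      omega

lemma sum_notMem_of_two_le_card {P : Finset ℕ} (hP : ∀ x ∈ P, 1 ≤ x) (hcard : 2 ≤ #P) :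
    ∑ x ∈ P, x ∉ P := by
  intro hmem
  have hrest : #(P.erase (∑ x ∈ P, x)) ≤ ∑ x ∈ P.erase (∑ x ∈ P, x), x := by
    simpa using card_nsmul_le_sum _ id 1 fun x hx => hP x (mem_of_mem_erase hx)
  have := add_sum_erase P id hmem
  rw [card_erase_of_mem hmem] at hrest
  simp only [id] at this
  omega

lemma two_add_mul_le_two_mul_sum_of_card_filter_le_one {V : Finset ℕ} {L : ℕ} (hV : V.Nonempty)
    (hV1 : ∀ x ∈ V, 1 ≤ x) (hlow : #(V.filter (· ≤ L)) ≤ 1) :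
    (#V - 1) * (2 * L + #V) + 2 ≤ 2 * ∑ x ∈ V, x := by
  have hhigh := card_mul_le_two_mul_sum_of_forall_gt (V.filter (¬ · ≤ L)) (L := L)
    (fun x hx => not_le.1 (mem_filter.1 hx).2)
  have hlow_sum : #(V.filter (· ≤ L)) ≤ ∑ x ∈ V.filter (· ≤ L), x := by
    simpa using card_nsmul_le_sum _ id 1 fun x hx => hV1 x (mem_filter.1 hx).1
  have hsum := sum_filter_add_sum_filter_not V (· ≤ L) id
  have hcard := card_filter_add_card_filter_not (s := V) (· ≤ L)
  obtain ⟨w, hw⟩ : ∃ w, #V = w + 1 := ⟨#V - 1, by have := hV.card_pos; omega⟩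
  rw [hw, Nat.add_sub_cancel]
  simp only [id] at hsum
  interval_cases hl : #(V.filter (· ≤ L))
  · rw [show #(V.filter (¬ · ≤ L)) = w + 1 by omega] at hhigh
    nlinarith
  · rw [show #(V.filter (¬ · ≤ L)) = w by omega] at hhigh
    nlinarith

end Finset

lemma isRainbow_iff_injOn {m : ℕ} {χ a : ℕ → ℕ} :
    IsRainbow m χ a ↔ Set.InjOn (χ ∘ a) (Icc 1 m) := by
  simp only [IsRainbow, Set.InjOn, mem_coe, Function.comp_apply]
  exact forall₂_congr fun i _ => forall₂_congr fun j _ => not_imp_not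

lemma ExactColoring.image_eq {n r : ℕ} {χ : ℕ → ℕ} (hχ : ExactColoring n r χ) :
    (Icc 1 n).image χ = Icc 1 r := by
  refine (image_subset_iff.2 hχ.1).antisymm fun c hc => ?_
  obtain ⟨x, hx, rfl⟩ := hχ.2 c hc
  exact mem_image_of_mem χ hx

def firstOccurrences (n : ℕ) (χ : ℕ → ℕ) : Finset ℕ :=
  (Icc 1 n).filter fun x => χ x ∉ (Ico 1 x).image χ

section firstOccurrences

variable {n : ℕ} {χ : ℕ → ℕ}

lemma firstOccurrences_subset : firstOccurrences n χ ⊆ Icc 1 n := filter_subset _ _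

lemma one_mem_firstOccurrences (hn : 1 ≤ n) : 1 ∈ firstOccurrences n χ :=
  mem_filter.2 ⟨mem_Icc.2 ⟨le_rfl, hn⟩, by simp⟩

lemma injOn_firstOccurrences : Set.InjOn χ (firstOccurrences n χ) := by
  intro x hx y hy hxy
  simp only [firstOccurrences, coe_filter, mem_Icc, mem_image, mem_Ico, Set.mem_ofPred_eq,
    not_exists, not_and] at hx hy
  by_contra hne
  rcases Nat.lt_or_gt_of_ne hne with h | h
  · exact hy.2 x ⟨hx.1.1, h⟩ hxy
  · exact hx.2 y ⟨hy.1.1, h⟩ hxy.symm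

lemma image_firstOccurrences : (firstOccurrences n χ).image χ = (Icc 1 n).image χ := by
  refine (image_subset_image firstOccurrences_subset).antisymm fun c hc => ?_
  obtain ⟨x, hx, rfl⟩ := mem_image.1 hc
  induction x using Nat.strong_induction_on with
  | _ x ih =>
    by_cases h : χ x ∈ (Ico 1 x).image χ
    · obtain ⟨y, hy, hyx⟩ := mem_image.1 h
      rw [mem_Ico] at hy
      rw [← hyx]
      have hyn : y ∈ Icc 1 n := mem_Icc.2 ⟨hy.1, hy.2.le.trans (mem_Icc.1 hx).2⟩
      exact ih y hy.2 hyn (mem_image_of_mem χ hyn)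
    · exact mem_image_of_mem χ (mem_filter.2 ⟨hx, h⟩)

lemma ExactColoring.card_firstOccurrences {r : ℕ} (hχ : ExactColoring n r χ) :
    #(firstOccurrences n χ) = r := by
  rw [← card_image_of_injOn injOn_firstOccurrences, image_firstOccurrences, hχ.image_eq,
    Nat.card_Icc, Nat.add_sub_cancel]

end firstOccurrences

lemma exists_isRainbow_of_sum_mem {m n : ℕ} {χ : ℕ → ℕ} {W P : Finset ℕ} (hm : 1 ≤ m)
    (hWn : W ⊆ Icc 1 n) (hχ : Set.InjOn χ W) (hPW : P ⊆ W) (hP : #P = m - 1)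
    (hsum : ∑ x ∈ P, x ∈ W) (hsumP : ∑ x ∈ P, x ∉ P) :
    ∃ a, IsSolutionEm m n a ∧ IsRainbow m χ a := by
  obtain ⟨f, hf⟩ := (Icc 1 (m - 1)).finite_toSet.exists_bijOn_of_encard_eq (t := (P : Set ℕ))
    (by rw [Set.encard_coe_eq_coe_finsetCard, Set.encard_coe_eq_coe_finsetCard, Nat.card_Icc, hP,
      Nat.add_sub_cancel])
  set a := Function.update f m (∑ x ∈ P, x)
  have hm_notMem : m ∉ (Icc 1 (m - 1) : Set ℕ) := by
    rw [coe_Icc, Set.mem_Icc]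
    omega
  have hIcc : (Icc 1 m : Set ℕ) = insert m (Icc 1 (m - 1) : Set ℕ) := by
    ext i
    simp only [coe_Icc, Set.mem_Icc, Set.mem_insert_iff]
    omega
  have heq : Set.EqOn a f (Icc 1 (m - 1)) := fun i hi => Function.update_of_ne (by
    rintro rfl; exact hm_notMem hi) _ _
  have himage : a '' (Icc 1 (m - 1) : Set ℕ) = P := by rw [heq.image_eq, hf.image_eq]
  have hmaps : Set.MapsTo a (Icc 1 m) W := by
    rw [hIcc]
    rintro i (rfl | hi)
    · simpa [a] using hsum
    · exact hPW (by simpa only [himage, mem_coe] using Set.mem_image_of_mem a hi)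
  have hinj : Set.InjOn a (Icc 1 m) := by
    rw [hIcc, Set.injOn_insert hm_notMem, himage]
    exact ⟨(hf.injOn).congr heq.symm, by simpa [a] using hsumP⟩
  refine ⟨a, ⟨fun i hi => hWn (hmaps hi), ?_⟩, isRainbow_iff_injOn.2 (hχ.comp hinj hmaps)⟩
  have himage' : (Icc 1 (m - 1)).image a = P := by exact_mod_cast himage
  rw [show a m = ∑ x ∈ P, x from Function.update_self .., ← himage',
    sum_image (hinj.mono (hIcc ▸ Set.subset_insert _ _))]

lemma succ_le_sum_add_add_card_of_forall_sum_notMem {n t : ℕ} {W B : Finset ℕ} (hB : B ⊆ W)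
    (hBt : ∀ x ∈ B, x < t) (ht : 1 ≤ t)
    (hW : ∀ P ⊆ W, #P = #B + 1 → ∑ x ∈ P, x ∉ W) :
    n + 1 ≤ ∑ x ∈ B, x + t + 2 * #((Icc 1 n \ W).filter (t ≤ ·)) := by
  set s := ∑ x ∈ B, x
  set C := (Icc 1 n \ W).filter (t ≤ ·)
  have hcover : Ico (s + t) (n + 1) ⊆ C ∪ C.image (· + s) := by
    intro v hv
    rw [mem_Ico] at hv
    by_cases hvW : v ∈ W
    · have huW : v - s ∉ W := by
        intro huW
        have huB : v - s ∉ B := fun h => by have := hBt _ h; omega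
        refine hW (insert (v - s) B) (insert_subset huW hB) (card_insert_of_notMem huB) ?_
        rwa [sum_insert huB, Nat.sub_add_cancel (by omega)]
      refine mem_union_right _ (mem_image.2 ⟨v - s, mem_filter.2 ⟨?_, by omega⟩, by omega⟩)
      exact mem_sdiff.2 ⟨mem_Icc.2 ⟨by omega, by omega⟩, huW⟩
    · refine mem_union_left _ (mem_filter.2 ⟨?_, by omega⟩)
      exact mem_sdiff.2 ⟨mem_Icc.2 ⟨by omega, by omega⟩, hvW⟩
  have hcard := (card_le_card hcover).trans (card_union_le _ _)
  have := card_image_le (s := C) (f := (· + s))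
  rw [Nat.card_Ico] at hcard
  omega

theorem two_mul_succ_le_of_forall_sum_notMem {n k : ℕ} {W : Finset ℕ} (hk : 2 ≤ k)
    (hWn : W ⊆ Icc 1 n) (h1 : 1 ∈ W) (hkW : k ≤ #W)
    (hW : ∀ P ⊆ W, #P = k + 1 → ∑ x ∈ P, x ∉ W) :
    2 * (n + 1) ≤ (k + 1) * (k + 2) + 2 * k * #(Icc 1 n \ W) := by
  obtain ⟨t, htn, hBcard⟩ := W.exists_le_card_filter_lt_eq (b := n + 1) (k := k) <| by
    rwa [filter_true_of_mem fun x hx => Nat.lt_succ_of_le (mem_Icc.1 (hWn hx)).2]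
  have ht : t = k + 1 + #((Icc 1 n \ W).filter (· < t)) := by
    have hsplit : W.filter (· < t) ∪ (Icc 1 n \ W).filter (· < t) = Ico 1 t := by
      rw [← filter_union, union_sdiff_of_subset hWn]
      ext x
      simp only [mem_filter, mem_Icc, mem_Ico]
      omega
    have := congrArg card hsplit
    rw [card_union_of_disjoint (disjoint_filter_filter disjoint_sdiff), Nat.card_Ico] at this
    omega
  have h1B : 1 ∈ W.filter (· < t) := mem_filter.2 ⟨h1, by omega⟩
  have hsumB : 2 * ∑ x ∈ W.filter (· < t), x + (k - 1) * k ≤ 2 + 2 * (k - 1) * t := by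
    have := two_mul_sum_add_le_of_forall_lt ((W.filter (· < t)).erase 1) (L := t)
      fun x hx => (mem_filter.1 (mem_of_mem_erase hx)).2
    rw [card_erase_of_mem h1B, hBcard, Nat.sub_add_cancel (by omega)] at this
    rw [← add_sum_erase _ (fun x => x) h1B]
    omega
  have hhigh := succ_le_sum_add_add_card_of_forall_sum_notMem (n := n) (filter_subset _ W)
    (fun x hx => (mem_filter.1 hx).2) (by omega) (hBcard ▸ hW)
  have hN := card_filter_add_card_filter_not (s := Icc 1 n \ W) (· < t)
  simp only [not_lt] at hN
  obtain ⟨j, rfl⟩ : ∃ j, k = j + 1 := ⟨k - 1, by omega⟩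
  simp only [Nat.add_sub_cancel] at hsumB
  generalize #((Icc 1 n \ W).filter (· < t)) = A at ht hN
  generalize #((Icc 1 n \ W).filter (t ≤ ·)) = C at hhigh hN
  generalize ∑ x ∈ W.filter (· < t), x = S at hsumB hhigh
  rw [← hN]
  subst ht
  nlinarith [Nat.le_mul_of_pos_left C (by omega : 0 < j)]

theorem two_mul_succ_le_of_forall_not_isRainbow {m n r : ℕ} {χ : ℕ → ℕ} (hm : 4 ≤ m)
    (hr : m - 2 ≤ r) (hχ : ExactColoring n r χ)
    (hfree : ∀ a, IsSolutionEm m n a → ¬ IsRainbow m χ a) :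
    2 * (n + 1) ≤ m * (m - 1) + 2 * (m - 2) * (n - r) := by
  have hW := hχ.card_firstOccurrences
  have hWn : firstOccurrences n χ ⊆ Icc 1 n := firstOccurrences_subset
  have hrn : r ≤ n := by simpa [hW] using card_le_card hWn
  have key := two_mul_succ_le_of_forall_sum_notMem (k := m - 2) (by omega) hWn
    (one_mem_firstOccurrences (by omega)) (by omega) fun P hPW hP hsum => by
      have hP1 : ∀ x ∈ P, 1 ≤ x := fun x hx => (mem_Icc.1 (hWn (hPW hx))).1
      obtain ⟨a, ha, hrb⟩ := exists_isRainbow_of_sum_mem (m := m) (by omega) hWn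
        injOn_firstOccurrences hPW (by omega) hsum (sum_notMem_of_two_le_card hP1 (by omega))
      exact hfree a ha hrb
  rw [card_sdiff_of_subset hWn, hW, Nat.card_Icc, Nat.add_sub_cancel] at key
  obtain ⟨k, rfl⟩ : ∃ k, m = k + 2 := ⟨m - 2, by omega⟩
  simpa [Nat.add_sub_cancel, show k + 2 - 1 = k + 1 by omega, mul_comm (k + 2)] using key

theorem hasRainbowProp_sub_of_le {m n q : ℕ} (hm : 4 ≤ m)
    (hq : m * (m - 1) + 2 * (m - 2) * q ≤ 2 * n) :
    HasRainbowProp m n (n - q) := by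
  intro χ hχ
  by_contra hfree
  simp only [not_exists, not_and] at hfree
  have h1 : 2 * (m - 2) ≤ m * (m - 1) := Nat.mul_le_mul (by omega) (by omega)
  have h2 : 2 * q ≤ 2 * (m - 2) * q := Nat.mul_le_mul_right q (by omega)
  have := two_mul_succ_le_of_forall_not_isRainbow hm (by omega) hχ hfree
  rw [Nat.sub_sub_self (by omega)] at this
  omega

theorem not_hasRainbowProp_sub_of_two_mul_lt {m n L : ℕ} (hm : 2 ≤ m) (hL : 1 ≤ L)
    (hLn : L ≤ n) (hn : 2 * n < (m - 2) * (2 * L + m - 1) + 2) :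
    ¬ HasRainbowProp m n (n + 1 - L) := by
  intro h
  set χ : ℕ → ℕ := fun x => if x ≤ L then 1 else x + 1 - L
  have hχ : ExactColoring n (n + 1 - L) χ := by
    refine ⟨fun x hx => ?_, fun c hc => ?_⟩
    · rw [mem_Icc] at hx ⊢
      dsimp only [χ]
      split_ifs <;> omega
    · rw [mem_Icc] at hc
      rcases eq_or_lt_of_le hc.1 with rfl | hc1
      · exact ⟨1, mem_Icc.2 ⟨le_rfl, by omega⟩, if_pos hL⟩
      · refine ⟨c + L - 1, mem_Icc.2 ⟨by omega, by omega⟩, ?_⟩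
        dsimp only [χ]
        split_ifs <;> omega
  obtain ⟨a, ⟨ha, hsum⟩, hrb⟩ := h χ hχ
  have hinj : Set.InjOn a (Icc 1 m) := (isRainbow_iff_injOn.1 hrb).of_comp
  have hsub : Icc 1 (m - 1) ⊆ Icc 1 m := Icc_subset_Icc le_rfl (Nat.sub_le m 1)
  set V := (Icc 1 (m - 1)).image a
  have hV : #V = m - 1 := by
    rw [card_image_of_injOn (hinj.mono (coe_subset.2 hsub)), Nat.card_Icc, Nat.add_sub_cancel]
  have hVsum : ∑ x ∈ V, x = a m := by rw [sum_image (hinj.mono (coe_subset.2 hsub)), hsum]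
  have hV1 : ∀ x ∈ V, 1 ≤ x := by
    simp only [V, mem_image]
    rintro _ ⟨i, hi, rfl⟩
    exact (mem_Icc.1 (ha i (hsub hi))).1
  have hlow : #(V.filter (· ≤ L)) ≤ 1 := by
    refine card_le_one.2 fun x hx y hy => ?_
    simp only [V, mem_filter, mem_image] at hx hy
    obtain ⟨⟨i, hi, rfl⟩, hiL⟩ := hx
    obtain ⟨⟨j, hj, rfl⟩, hjL⟩ := hy
    by_contra hne
    exact hrb i (hsub hi) j (hsub hj) (fun hij => hne (hij ▸ rfl)) (by simp [χ, hiL, hjL])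
  have hVne : V.Nonempty := card_pos.1 (by omega)
  have := two_add_mul_le_two_mul_sum_of_card_filter_le_one hVne hV1 hlow
  have ham : a m ≤ n := (mem_Icc.1 (ha m (mem_Icc.2 ⟨by omega, le_rfl⟩))).2
  rw [hV, hVsum, show m - 1 - 1 = m - 2 by omega, show 2 * L + (m - 1) = 2 * L + m - 1 by omega]
    at this
  omega

theorem not_hasRainbowProp_of_add_lt {m n q r : ℕ} (hm : 2 ≤ m)
    (hq : 2 * n < m * (m - 1) + 2 * (m - 2) * (q + 1)) (hr : 1 ≤ r) (hrq : r + q < n) :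
    ¬ HasRainbowProp m n r := by
  have hL := not_hasRainbowProp_sub_of_two_mul_lt (m := m) (n := n) (L := n + 1 - r) (by omega)
    (by omega) (by omega) ?_
  · rwa [Nat.sub_sub_self (by omega)] at hL
  obtain ⟨k, rfl⟩ : ∃ k, m = k + 2 := ⟨m - 2, by omega⟩
  simp only [Nat.add_sub_cancel, show k + 2 - 1 = k + 1 by omega] at hq ⊢
  have hqL : q + 2 ≤ n + 1 - r := by omega
  generalize n + 1 - r = L at hqL ⊢
  rw [show 2 * L + (k + 2) - 1 = 2 * L + k + 1 by omega]
  nlinarith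

lemma ceil_eq_sub_of_le_of_lt {m n q : ℕ} (hm : 3 ≤ m)
    (hlo : m * (m - 1) + 2 * (m - 2) * q ≤ 2 * n)
    (hhi : 2 * n < m * (m - 1) + 2 * (m - 2) * (q + 1)) :
    ⌈(((m : ℚ) - 3) * n + (m : ℚ) * ((m : ℚ) - 1) / 2) / ((m : ℚ) - 2)⌉ =
      ((n - q : ℕ) : ℤ) := by
  obtain ⟨k, rfl⟩ : ∃ k, m = k + 3 := ⟨m - 3, by omega⟩
  simp only [show k + 3 - 1 = k + 2 by omega, show k + 3 - 2 = k + 1 by omega] at hlo hhi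
  have hqn : q ≤ n := by nlinarith
  have hlo' : ((k + 3) * (k + 2) + 2 * (k + 1) * q : ℚ) ≤ 2 * n := by exact_mod_cast hlo
  have hhi' : (2 * n : ℚ) < (k + 3) * (k + 2) + 2 * (k + 1) * (q + 1) := by exact_mod_cast hhi
  rw [Int.ceil_eq_iff, Nat.cast_sub hqn]
  push_cast
  have hpos : (0 : ℚ) < k + 3 - 2 := by linarith [(k.cast_nonneg : (0 : ℚ) ≤ k)]
  constructor
  · rw [lt_div_iff₀ hpos]
    nlinarith
  · rw [div_le_iff₀ hpos]
    nlinarith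

/-- For m ≥ 4 and n ≥ m(m-1)/2,
RS_m(n) = ⌈((m-3)n + m(m-1)/2)/(m-2)⌉: the ceiling is the least number of colors r ≥ 1
such that every exact r-coloring of [1,n] contains a rainbow solution to E_m. -/
theorem rainbow_schur_number_value (m n : ℕ) (hm : 4 ≤ m) (hn : m * (m - 1) / 2 ≤ n) :
    ∃ R : ℕ,
      (R : ℤ) = ⌈(((m : ℚ) - 3) * n + (m : ℚ) * ((m : ℚ) - 1) / 2) / ((m : ℚ) - 2)⌉ ∧
      IsLeast {r : ℕ | 1 ≤ r ∧ HasRainbowProp m n r} R := by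
  set q := (n - m * (m - 1) / 2) / (m - 2)
  have hT : m * (m - 1) / 2 * 2 = m * (m - 1) :=
    Nat.div_mul_cancel (Nat.even_mul_pred_self m).two_dvd
  have hq_le : (m - 2) * q ≤ n - m * (m - 1) / 2 := Nat.mul_div_le _ _
  have hq_lt : n - m * (m - 1) / 2 < (m - 2) * (q + 1) := Nat.lt_mul_div_succ _ (by omega)
  have hlo : m * (m - 1) + 2 * (m - 2) * q ≤ 2 * n := by rw [mul_assoc]; omega
  have hhi : 2 * n < m * (m - 1) + 2 * (m - 2) * (q + 1) := by rw [mul_assoc]; omega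
  refine ⟨n - q, (ceil_eq_sub_of_le_of_lt (by omega) hlo hhi).symm,
    ⟨?_, hasRainbowProp_sub_of_le hm hlo⟩, ?_⟩
  · have : 2 * q ≤ 2 * (m - 2) * q := Nat.mul_le_mul_right q (by omega)
    have : 4 * 3 ≤ m * (m - 1) := Nat.mul_le_mul hm (by omega)
    omega
  · rintro r ⟨hr, hrR⟩
    by_contra hlt
    exact not_hasRainbowProp_of_add_lt (by omega) hhi hr (by omega) hrR
end

section
/- For all integers m ≥ 3 and n ≥ 2m−4 (with n ≥ m−1 so that E_m is solvable in [1,n] with two colors), RS_{2,m}(n) = 2; that is, every exact 2-coloring of [1,n] contains a solution x₁ + x₂ + ⋯ + x_{m-1} = x_m with x₁,...,x_m ∈ [1,n] (repetitions allowed) whose entries receive at least 2 distinct colors, and the single exact 1-coloring contains no such solution. -/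

lemma sum_aux (m c d : ℕ) (hm : 3 ≤ m) :
    ∑ i ∈ Finset.Icc 1 (m-1), (if i = m then d else if i = m-1 then c else 1) = m - 2 + c := by
  have hb : m - 1 ∈ Finset.Icc 1 (m-1) := by simp; omega
  rw [← Finset.add_sum_erase _ _ hb]
  have h1 : (if m - 1 = m then d else if m - 1 = m - 1 then c else 1) = c := by
    rw [if_neg (by omega), if_pos rfl]
  rw [h1]
  have h2 : ∑ i ∈ (Finset.Icc 1 (m-1)).erase (m-1),
      (if i = m then d else if i = m-1 then c else 1) = m - 2 := by
    rw [Finset.sum_congr rfl (fun i hi => ?_)]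
    · rw [Finset.sum_const, Finset.card_erase_of_mem hb, Nat.card_Icc, smul_eq_mul, mul_one]
      omega
    · obtain ⟨hne, hmem⟩ := Finset.mem_erase.mp hi
      have := Finset.mem_Icc.mp hmem
      rw [if_neg (by omega), if_neg hne]
  rw [h2]; omega
/-- For all m ≥ 3 and n ≥ 2m−4 (with n ≥ m−1), the weakened rainbow Schur
number RS_{2,m}(n) equals 2: 2 is the least number of colors r ≥ 1 such that every exact
r-coloring of [1,n] contains a solution to E_m using at least 2 colors (in particular every
exact 2-coloring contains such a solution, and the exact 1-coloring contains none). -/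
theorem weak_rainbow_schur_two (m n : ℕ) (hm : 3 ≤ m) (hn1 : 2 * m - 4 ≤ n)
    (hn2 : m - 1 ≤ n) :
    IsLeast {r : ℕ | 1 ≤ r ∧ HasWeakProp m 2 n r} 2 := by
  have hn0 : 1 ≤ n := by omega
  constructor
  · refine ⟨one_le_two, ?_⟩
    intro χ hχ
    obtain ⟨x, hx, hx1⟩ := hχ.2 1 (by simp)
    obtain ⟨y, hy, hy2⟩ := hχ.2 2 (by simp)
    obtain ⟨k, hk, hkne⟩ : ∃ k ∈ Finset.Icc 1 n, χ k ≠ χ 1 := by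
      by_cases h : χ 1 = 1
      · exact ⟨y, hy, by rw [hy2, h]; norm_num⟩
      · exact ⟨x, hx, by rw [hx1]; exact fun e => h e.symm⟩
    have hkmem := Finset.mem_Icc.mp hk
    by_cases hcase : k ≤ m - 2
    · refine ⟨fun i => if i = m then k + m - 2 else if i = m - 1 then k else 1, ⟨?_, ?_⟩, ?_⟩
      · intro i hi
        have := Finset.mem_Icc.mp hi
        beta_reduce
        rw [Finset.mem_Icc]
        split_ifs <;> omega
      · have := sum_aux m k (k + m - 2) hm
        beta_reduce
        rw [this]
        split_ifs <;> omega
      · unfold colorsUsed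
        refine Finset.one_lt_card.mpr ⟨χ 1, ?_, χ k, ?_, fun e => hkne e.symm⟩
        · refine Finset.mem_image.mpr ⟨1, Finset.mem_Icc.mpr (by omega), ?_⟩
          beta_reduce
          rw [if_neg (by omega), if_neg (by omega)]
        · refine Finset.mem_image.mpr ⟨m - 1, Finset.mem_Icc.mpr (by omega), ?_⟩
          beta_reduce
          rw [if_neg (by omega), if_pos rfl]
    · refine ⟨fun i => if i = m then k else if i = m - 1 then k - (m - 2) else 1, ⟨?_, ?_⟩, ?_⟩
      · intro i hi
        have := Finset.mem_Icc.mp hi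
        beta_reduce
        rw [Finset.mem_Icc]
        split_ifs <;> omega
      · have := sum_aux m (k - (m - 2)) k hm
        beta_reduce
        rw [this]
        split_ifs <;> omega
      · unfold colorsUsed
        refine Finset.one_lt_card.mpr ⟨χ 1, ?_, χ k, ?_, fun e => hkne e.symm⟩
        · refine Finset.mem_image.mpr ⟨1, Finset.mem_Icc.mpr (by omega), ?_⟩
          beta_reduce
          rw [if_neg (by omega), if_neg (by omega)]
        · refine Finset.mem_image.mpr ⟨m, Finset.mem_Icc.mpr (by omega), ?_⟩
          beta_reduce
          rw [if_pos rfl]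
  · rintro r ⟨hr1, hr⟩
    by_contra hlt
    have hr' : r = 1 := by omega
    subst hr'
    obtain ⟨a, _, hcol⟩ := hr (fun _ => 1)
      ⟨fun x hx => by simp, fun c hc => ⟨1, by simp [hn0], by simp at hc ⊢; omega⟩⟩
    have : colorsUsed m (fun _ => 1) a ≤ 1 := by
      unfold colorsUsed
      calc ((Finset.Icc 1 m).image fun i => (1:ℕ)).card
          ≤ ({1} : Finset ℕ).card := Finset.card_le_card (Finset.image_subset_iff.mpr
            (fun _ _ => Finset.mem_singleton_self 1))
        _ = 1 := rfl
    omega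
end

section
/- Let χ be the exact 3-coloring of [1,6] with color classes C₁ = {1,2,5,6}, C₂ = {3}, and C₃ = {4}. Then no solution x₁ + x₂ + x₃ + x₄ + x₅ = x₆ with all x_i ∈ [1,6] (repetitions allowed) uses at least 2 colors under χ. Consequently RS_{2,6}(6) ≥ 4. -/
/-- The exact 3-coloring of [1,6] with color classes C₁ = {1,2,5,6}, C₂ = {3}, C₃ = {4}. -/
def chiExample : ℕ → ℕ := fun x => if x = 3 then 2 else if x = 4 then 3 else 1

open Finset in
lemma sol_avoid (a : ℕ → ℕ) (ha : IsSolutionEm 6 6 a) :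
    ∀ i ∈ Finset.Icc 1 6, a i ≠ 3 ∧ a i ≠ 4 := by
  obtain ⟨hmem, hsum⟩ := ha
  have h1 := hmem 1 (by decide)
  have h2 := hmem 2 (by decide)
  have h3 := hmem 3 (by decide)
  have h4 := hmem 4 (by decide)
  have h5 := hmem 5 (by decide)
  have h6 := hmem 6 (by decide)
  simp only [Finset.mem_Icc] at h1 h2 h3 h4 h5 h6
  have hs : a 1 + a 2 + a 3 + a 4 + a 5 = a 6 := by
    have : Finset.Icc 1 (6-1) = ({1,2,3,4,5} : Finset ℕ) := by decide
    rw [this] at hsum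
    simp [Finset.sum_insert, Finset.mem_insert] at hsum
    omega
  intro i hi
  rw [Finset.mem_Icc] at hi
  obtain ⟨hi1, hi2⟩ := hi
  interval_cases i <;> omega

open Finset in
lemma colors_le_one (χ a : ℕ → ℕ) (h : ∀ i ∈ Finset.Icc 1 6, χ (a i) = 1) :
    colorsUsed 6 χ a < 2 := by
  have : ((Finset.Icc 1 6).image fun i => χ (a i)) ⊆ {1} := by
    intro c hc
    simp only [Finset.mem_image] at hc
    obtain ⟨i, hi, rfl⟩ := hc
    simp [h i hi]
  calc colorsUsed 6 χ a ≤ ({1} : Finset ℕ).card := Finset.card_le_card this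
    _ < 2 := by simp

/-- The coloring with classes C₁ = {1,2,5,6}, C₂ = {3}, C₃ = {4} is an
exact 3-coloring of [1,6] under which no solution x₁ + x₂ + x₃ + x₄ + x₅ = x₆ in [1,6]
uses at least 2 colors. Consequently RS_{2,6}(6) ≥ 4: any number of colors r ≥ 1 such that
every exact r-coloring of [1,6] contains a solution to E₆ using at least 2 colors is ≥ 4. -/
theorem RS_two_six_ge_four :
    ExactColoring 6 3 chiExample ∧
    (∀ a : ℕ → ℕ, IsSolutionEm 6 6 a → colorsUsed 6 chiExample a < 2) ∧
    ∀ r : ℕ, 1 ≤ r → HasWeakProp 6 2 6 r → 4 ≤ r := by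
  refine ⟨?_, ?_, ?_⟩
  · constructor
    · intro x hx; fin_cases hx <;> decide
    · intro c hc; fin_cases hc
      · exact ⟨1, by decide, by decide⟩
      · exact ⟨3, by decide, by decide⟩
      · exact ⟨4, by decide, by decide⟩
  · intro a ha
    apply colors_le_one
    intro i hi
    obtain ⟨h3, h4⟩ := sol_avoid a ha i hi
    simp [chiExample, h3, h4]
  · intro r hr H
    by_contra hlt
    push_neg at hlt
    interval_cases r
    · obtain ⟨a, ha, hc⟩ := H (fun _ => 1)
        ⟨fun x _ => by simp, fun c hc => by
          simp only [Finset.mem_Icc] at hc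
          exact ⟨1, by decide, by simp; omega⟩⟩
      exact absurd hc (Nat.not_le.mpr (colors_le_one (fun _ => 1) a (fun i _ => rfl)))
    · obtain ⟨a, ha, hc⟩ := H (fun x => if x = 3 then 2 else 1)
        ⟨fun x hx => by fin_cases hx <;> decide, fun c hc => by
          fin_cases hc
          · exact ⟨1, by decide, by decide⟩
          · exact ⟨3, by decide, by decide⟩⟩
      have : colorsUsed 6 (fun x => if x = 3 then 2 else 1) a < 2 := by
        apply colors_le_one
        intro i hi
        obtain ⟨h3, _⟩ := sol_avoid a ha i hi
        simp [h3]
      exact absurd hc (Nat.not_le.mpr this)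
    · obtain ⟨a, ha, hc⟩ := H chiExample
        ⟨fun x hx => by fin_cases hx <;> decide, fun c hc => by
          fin_cases hc
          · exact ⟨1, by decide, by decide⟩
          · exact ⟨3, by decide, by decide⟩
          · exact ⟨4, by decide, by decide⟩⟩
      have : colorsUsed 6 chiExample a < 2 := by
        apply colors_le_one
        intro i hi
        obtain ⟨h3, h4⟩ := sol_avoid a ha i hi
        simp [chiExample, h3, h4]
      exact absurd hc (Nat.not_le.mpr this)
end

section
/- Let m ≥ 4, 3 ≤ t ≤ m, and n ≥ t(t−1)/2 + m − t be integers. Then RS_{t,m}(n) = ⌈((t−3)n + t(t−1)/2 + m − t)/(t−2)⌉. -/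
open Finset

lemma card_mul_le_two_mul_sum_of_lt (g : ℕ) {K : Finset ℕ} (hK : ∀ x ∈ K, g < x) :
    #K * (2 * g + #K + 1) ≤ 2 * ∑ x ∈ K, x := by
  induction K using Finset.induction_on_max with
  | empty => simp
  | insert a s hlt ih =>
    have has : a ∉ s := fun h => (hlt a h).false
    have hs : ∀ x ∈ s, g < x := fun x hx => hK x (mem_insert_of_mem hx)
    have hcard : #s ≤ a - g - 1 := by
      simpa using card_le_card (t := Ioo g a) fun x hx => mem_Ioo.2 ⟨hs x hx, hlt x hx⟩
    have hga : g + #s + 1 ≤ a := by have := hK a (mem_insert_self a s); omega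
    rw [card_insert_of_notMem has, sum_insert has]
    nlinarith [ih hs]

lemma two_mul_sum_add_card_mul_card_le (Q : ℕ) {K : Finset ℕ} (hK : ∀ x ∈ K, x ≤ Q) :
    2 * ∑ x ∈ K, x + #K * #K ≤ #K * (2 * Q + 1) := by
  induction K using Finset.induction_on_min with
  | empty => simp
  | insert a s hlt ih =>
    have has : a ∉ s := fun h => (hlt a h).false
    have hs : ∀ x ∈ s, x ≤ Q := fun x hx => hK x (mem_insert_of_mem hx)
    have hcard : #s ≤ Q - a := by
      simpa using card_le_card (t := Ioc a Q) fun x hx => mem_Ioc.2 ⟨hlt x hx, hs x hx⟩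
    have haQ : a + #s ≤ Q := by have := hK a (mem_insert_self a s); omega
    rw [card_insert_of_notMem has, sum_insert has]
    nlinarith [ih hs]

lemma exists_subset_card_eq_forall_lt_of_mem_sdiff {α : Type*} [LinearOrder α] (M : Finset α) :
    ∀ k ≤ #M, ∃ A ⊆ M, #A = k ∧ ∀ a ∈ A, ∀ x ∈ M \ A, a < x := by
  induction M using Finset.induction_on_min with
  | empty => intro k hk; exact ⟨∅, subset_refl _, by simp_all, by simp⟩
  | insert a s hlt ih =>
    have has : a ∉ s := fun h => (hlt a h).false
    rintro (_ | k) hk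
    · exact ⟨∅, empty_subset _, rfl, by simp⟩
    obtain ⟨A, hAs, hA, hAlt⟩ := ih k (by rw [card_insert_of_notMem has] at hk; omega)
    refine ⟨insert a A, insert_subset_insert a hAs,
      by rw [card_insert_of_notMem fun h => has (hAs h), hA], fun b hb x hx => ?_⟩
    have hx' : x ∈ s \ A := by
      simp only [mem_sdiff, mem_insert, not_or] at hx ⊢
      tauto
    rcases mem_insert.1 hb with rfl | hbA
    · exact hlt x (mem_sdiff.1 hx').1
    · exact hAlt b hbA x hx'

lemma add_card_sdiff_lt_of_lt {M A : Finset ℕ} {n v x : ℕ} (hM : ∀ y ∈ M, y ≤ n) (hAM : A ⊆ M)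
    (hAlt : ∀ a ∈ A, ∀ y ∈ M \ A, a < y) (hvA : v ∈ A) (hx : x ∈ A) (hxv : x < v) :
    x + #(M \ A) < n := by
  have hsub : insert v (M \ A) ⊆ Ioc x n := by
    intro w hw
    rcases mem_insert.1 hw with rfl | hw
    · exact mem_Ioc.2 ⟨hxv, hM w (hAM hvA)⟩
    · exact mem_Ioc.2 ⟨hAlt x hx w hw, hM w (mem_sdiff.1 hw).1⟩
  have := card_le_card hsub
  rw [card_insert_of_notMem fun h => (mem_sdiff.1 h).2 hvA, Nat.card_Ioc] at this
  omega

lemma exists_isSolutionEm_of_list {m n : ℕ} (L : List ℕ) (hlen : L.length + 1 = m)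
    (hL : ∀ x ∈ L, 1 ≤ x) (hsum : L.sum ∈ Icc 1 n) :
    ∃ a : ℕ → ℕ, IsSolutionEm m n a ∧ ∀ x ∈ L.sum :: L, x ∈ (Icc 1 m).image a := by
  set a : ℕ → ℕ := fun i => (L ++ [L.sum]).getD (i - 1) 0 with ha
  have ha_succ : ∀ j (hj : j < L.length), a (j + 1) = L[j] := by
    intro j hj
    simp [ha, List.getD_eq_getElem?_getD, List.getElem?_append_left hj, hj]
  have ha_m : a m = L.sum := by
    simp [ha, ← hlen, List.getD_eq_getElem?_getD]
  have hsum_a : ∑ i ∈ Icc 1 (m - 1), a i = L.sum := by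
    rw [← hlen, Nat.add_sub_cancel, ← Ico_add_one_right_eq_Icc, sum_Ico_eq_sum_range,
      Nat.add_sub_cancel, sum_range]
    simp only [add_comm 1, fun j : Fin L.length => ha_succ j j.2]
    exact Fin.sum_univ_getElem L
  refine ⟨a, ⟨fun i hi => ?_, hsum_a.trans ha_m.symm⟩, fun x hx => ?_⟩
  · obtain ⟨hi1, him⟩ := mem_Icc.1 hi
    rcases him.lt_or_eq with him | rfl
    · obtain ⟨j, rfl⟩ : ∃ j, i = j + 1 := ⟨i - 1, by omega⟩
      have hj : j < L.length := by omega
      rw [ha_succ j hj]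
      exact mem_Icc.2 ⟨hL _ (List.getElem_mem hj),
        (List.le_sum_of_mem (List.getElem_mem hj)).trans (mem_Icc.1 hsum).2⟩
    · rwa [ha_m]
  · rcases List.mem_cons.1 hx with rfl | hx
    · exact mem_image.2 ⟨m, mem_Icc.2 ⟨by omega, le_rfl⟩, ha_m⟩
    · obtain ⟨j, hj, rfl⟩ := List.getElem_of_mem hx
      exact mem_image.2 ⟨j + 1, mem_Icc.2 ⟨by omega, by omega⟩, ha_succ j hj⟩

def Avoids (m t n : ℕ) (χ : ℕ → ℕ) : Prop :=
  ∀ a : ℕ → ℕ, IsSolutionEm m n a → colorsUsed m χ a < t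

lemma Avoids.card_image_lt {m t n : ℕ} {χ : ℕ → ℕ} (hav : Avoids m t n χ) (L : List ℕ)
    (hlen : L.length + 1 = m) (hL : ∀ x ∈ L, 1 ≤ x) (hsum : L.sum ∈ Icc 1 n) :
    #((L.sum :: L).toFinset.image χ) < t := by
  obtain ⟨a, ha, hmem⟩ := exists_isSolutionEm_of_list L hlen hL hsum
  refine lt_of_le_of_lt (card_le_card fun c hc => ?_) (hav a ha)
  obtain ⟨x, hx, rfl⟩ := mem_image.1 hc
  obtain ⟨i, hi, rfl⟩ := mem_image.1 (hmem x (List.mem_toFinset.1 hx))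
  exact mem_image.2 ⟨i, hi, rfl⟩

lemma Avoids.card_colors_lt {m t n : ℕ} {χ : ℕ → ℕ} (hav : Avoids m t n χ) {A : Finset ℕ}
    (hA : ∀ x ∈ A, 1 ≤ x) (hAm : #A + 3 ≤ m) {y w : ℕ} (hy : 1 ≤ y) (hwn : w ≤ n)
    (hw : m - 2 - #A + ∑ x ∈ A, x + y = w) :
    #(insert (χ y) (insert (χ w) (insert (χ 1) (A.image χ)))) < t := by
  set L := List.replicate (m - 2 - #A) 1 ++ A.toList ++ [y]
  have hLsum : L.sum = w := by simp [L, ← hw, Finset.sum_toList, add_assoc]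
  refine lt_of_le_of_lt (card_le_card fun c hc => ?_)
    (hav.card_image_lt L (by simp [L]; omega) (fun x hx => ?_) (hLsum ▸ mem_Icc.2 ⟨by omega, hwn⟩))
  · rw [hLsum]
    simp only [mem_insert, mem_image, List.mem_toFinset, List.mem_cons, L, List.mem_append,
      List.mem_replicate, mem_toList] at hc ⊢
    rcases hc with rfl | rfl | rfl | ⟨x, hx, rfl⟩
    · exact ⟨y, by simp, rfl⟩
    · exact ⟨w, by simp, rfl⟩
    · exact ⟨1, by omega, rfl⟩
    · exact ⟨x, by simp [hx], rfl⟩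
  · simp only [L, List.mem_append, List.mem_replicate, mem_toList, List.mem_singleton] at hx
    rcases hx with (⟨-, rfl⟩ | hx) | rfl
    · exact le_rfl
    · exact hA x hx
    · exact hy

def weakRainbowNumerator (m t n : ℕ) : ℕ := (t - 3) * n + (t * (t - 1) / 2 + m - t)

lemma two_mul_mul_pred_div_two (t : ℕ) : 2 * (t * (t - 1) / 2) = t * (t - 1) :=
  Nat.mul_div_cancel' (Nat.even_mul_pred_self t).two_dvd

lemma self_le_mul_pred_div_two {t : ℕ} (ht : 3 ≤ t) : t ≤ t * (t - 1) / 2 := by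
  have := two_mul_mul_pred_div_two t
  have : t * 2 ≤ t * (t - 1) := Nat.mul_le_mul_left t (by omega)
  omega

lemma sub_two_mul_le_weakRainbowNumerator {m t n U : ℕ} (ht : 3 ≤ t)
    (hU : U ≤ t * (t - 1) / 2 + m - t) (hn : t * (t - 1) / 2 + m - t ≤ n) :
    (t - 2) * U ≤ weakRainbowNumerator m t n := by
  rw [weakRainbowNumerator, show t - 2 = t - 3 + 1 by omega, add_one_mul]
  exact Nat.add_le_add (Nat.mul_le_mul_left _ (hU.trans hn)) hU

lemma weakRainbowNumerator_le {m t n : ℕ} (ht : 3 ≤ t) (hn : t * (t - 1) / 2 + m - t ≤ n) :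
    weakRainbowNumerator m t n ≤ (t - 2) * n := by
  rw [weakRainbowNumerator, show t - 2 = t - 3 + 1 by omega, add_one_mul]
  exact Nat.add_le_add_left hn _

def thresholdColoring (n r x : ℕ) : ℕ := if x ≤ n + 1 - r then 1 else x + r - n

lemma exactColoring_thresholdColoring {n r : ℕ} (hr : 1 ≤ r) (hrn : r ≤ n) :
    ExactColoring n r (thresholdColoring n r) := by
  refine ⟨fun x hx => ?_, fun c hc => ?_⟩
  · simp only [mem_Icc, thresholdColoring] at hx ⊢
    split_ifs <;> omega
  · simp only [mem_Icc] at hc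
    rcases hc.1.eq_or_lt with rfl | hc1
    · exact ⟨1, mem_Icc.2 ⟨le_rfl, by omega⟩, if_pos (by omega)⟩
    · refine ⟨n - r + c, mem_Icc.2 ⟨by omega, by omega⟩, ?_⟩
      rw [thresholdColoring, if_neg (by omega)]
      omega

lemma IsSolutionEm.card_mul_add_le_two_mul_last {m n g k : ℕ} {a : ℕ → ℕ}
    (ha : IsSolutionEm m n a) (hk : k ≤ #(((Icc 1 (m - 1)).filter (g < a ·)).image a)) :
    k * (2 * g + k + 1) + 2 * (m - 1 - k) ≤ 2 * a m := by
  set S := Icc 1 (m - 1) with hS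
  set B := S.filter (g < a ·)
  obtain ⟨I, hIB, hinj, hIB_image⟩ :=
    exists_subset_injOn_image_eq_of_surjOn (B : Set ℕ) (B.image a)
      (by rw [coe_image]; exact Set.surjOn_image a _)
  obtain ⟨J, hJI, hJ⟩ := exists_subset_card_eq (hk.trans (hIB_image ▸ card_image_of_injOn hinj).le)
  have hJS : J ⊆ S := fun i hi => (mem_filter.1 (hIB (hJI hi))).1
  have hsumJ : #J * (2 * g + #J + 1) ≤ 2 * ∑ i ∈ J, a i := by
    have := card_mul_le_two_mul_sum_of_lt g (K := J.image a) fun x hx => by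
      obtain ⟨i, hi, rfl⟩ := mem_image.1 hx
      exact (mem_filter.1 (hIB (hJI hi))).2
    rwa [card_image_of_injOn (hinj.mono hJI), sum_image (hinj.mono hJI)] at this
  have hrest : #(S \ J) ≤ ∑ i ∈ S \ J, a i := by
    simpa using card_nsmul_le_sum (S \ J) a 1 fun i hi =>
      (mem_Icc.1 (ha.1 i (Icc_subset_Icc_right (Nat.sub_le m 1) (mem_sdiff.1 hi).1))).1
  have hcard : #(S \ J) = m - 1 - k := by
    rw [card_sdiff_of_subset hJS, hJ, hS, Nat.card_Icc, Nat.add_sub_cancel]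
  rw [hJ] at hsumJ
  rw [← ha.2, ← sum_sdiff hJS]
  omega

lemma avoids_thresholdColoring {m t n r : ℕ} (ht : 3 ≤ t) (htm : t ≤ m) (hrn : r ≤ n)
    (hN : (t - 2) * r < weakRainbowNumerator m t n) :
    Avoids m t n (thresholdColoring n r) := by
  intro a ha
  by_contra! hcol
  set χ := thresholdColoring n r
  set g := n + 1 - r
  set B := (Icc 1 (m - 1)).filter (g < a ·)
  have hsub : (Icc 1 m).image (fun i => χ (a i)) ⊆
      insert 1 (insert (χ (a m)) ((B.image a).image χ)) := by
    intro c hc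
    obtain ⟨i, hi, rfl⟩ := mem_image.1 hc
    rcases (mem_Icc.1 hi).2.lt_or_eq with him | rfl
    · by_cases hgi : g < a i
      · exact mem_insert_of_mem (mem_insert_of_mem (mem_image_of_mem χ (mem_image_of_mem a
          (mem_filter.2 ⟨mem_Icc.2 ⟨(mem_Icc.1 hi).1, by omega⟩, hgi⟩))))
      · exact mem_insert.2 (Or.inl (if_pos (not_lt.1 hgi)))
    · exact mem_insert_of_mem (mem_insert_self _ _)
  have hB : t - 2 ≤ #(B.image a) := by
    have := (card_le_card hsub).trans ((card_insert_le _ _).trans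
      (Nat.succ_le_succ ((card_insert_le _ _).trans (Nat.succ_le_succ card_image_le))))
    unfold colorsUsed at hcol
    omega
  have hsum := ha.card_mul_add_le_two_mul_last hB
  have ham : a m ≤ n := (mem_Icc.1 (ha.1 m (mem_Icc.2 ⟨by omega, le_rfl⟩))).2
  have hT := two_mul_mul_pred_div_two t
  unfold weakRainbowNumerator at hN
  obtain ⟨s, rfl⟩ : ∃ s, t = s + 3 := ⟨t - 3, by omega⟩
  obtain ⟨k, rfl⟩ : ∃ k, m = k + (s + 3) := ⟨m - (s + 3), by omega⟩
  set T := (s + 3) * (s + 3 - 1) / 2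
  simp only [show s + 3 - 1 = s + 2 by omega, show s + 3 - 2 = s + 1 by omega,
    show s + 3 - 3 = s by omega, show k + (s + 3) - 1 - (s + 1) = k + 1 by omega,
    show T + (k + (s + 3)) - (s + 3) = T + k by omega] at hN hsum hT
  have hgr : (s + 1) * g + (s + 1) * r = (s + 1) * (n + 1) := by rw [← mul_add]; congr 1; omega
  nlinarith

def leastOfColor (n : ℕ) (χ : ℕ → ℕ) : Finset ℕ :=
  (Icc 1 n).filter fun x => χ x ∉ (Ico 1 x).image χ

section LeastOfColor

variable {n r : ℕ} {χ : ℕ → ℕ}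

lemma mem_Icc_of_mem_leastOfColor {x : ℕ} (hx : x ∈ leastOfColor n χ) : x ∈ Icc 1 n :=
  (mem_filter.1 hx).1

lemma le_of_mem_leastOfColor {x y : ℕ} (hx : x ∈ leastOfColor n χ) (hy : y ∈ Icc 1 n)
    (hxy : χ y = χ x) : x ≤ y :=
  not_lt.1 fun hyx => (mem_filter.1 hx).2 (mem_image.2 ⟨y, mem_Ico.2 ⟨(mem_Icc.1 hy).1, hyx⟩, hxy⟩)

lemma injOn_leastOfColor : Set.InjOn χ (leastOfColor n χ) := fun _ hx _ hy h =>
  le_antisymm (le_of_mem_leastOfColor hx (mem_Icc_of_mem_leastOfColor hy) h.symm)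
    (le_of_mem_leastOfColor hy (mem_Icc_of_mem_leastOfColor hx) h)

lemma one_mem_leastOfColor (hn : 1 ≤ n) : 1 ∈ leastOfColor n χ :=
  mem_filter.2 ⟨mem_Icc.2 ⟨le_rfl, hn⟩, by simp⟩

lemma ExactColoring.image_leastOfColor (hχ : ExactColoring n r χ) :
    (leastOfColor n χ).image χ = Icc 1 r := by
  ext c
  refine ⟨fun hc => ?_, fun hc => ?_⟩
  · obtain ⟨x, hx, rfl⟩ := mem_image.1 hc
    exact hχ.1 x (mem_Icc_of_mem_leastOfColor hx)
  · obtain ⟨x₀, hx₀, hx₀c⟩ := hχ.2 c hc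
    obtain ⟨x, hx, hmin⟩ := exists_min_image ((Icc 1 n).filter (χ · = c)) id
      ⟨x₀, mem_filter.2 ⟨hx₀, hx₀c⟩⟩
    obtain ⟨hxn, rfl⟩ := mem_filter.1 hx
    refine mem_image.2 ⟨x, mem_filter.2 ⟨hxn, fun hx' => ?_⟩, rfl⟩
    obtain ⟨y, hy, hyx⟩ := mem_image.1 hx'
    have hyn : y ∈ Icc 1 n := Ico_subset_Icc_self.trans (Icc_subset_Icc_right (mem_Icc.1 hxn).2) hy
    exact absurd (mem_Ico.1 hy).2 (not_lt.2 (hmin y (mem_filter.2 ⟨hyn, hyx⟩)))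

lemma ExactColoring.card_leastOfColor (hχ : ExactColoring n r χ) : #(leastOfColor n χ) = r := by
  rw [← card_image_of_injOn injOn_leastOfColor, hχ.image_leastOfColor, Nat.card_Icc,
    Nat.add_sub_cancel]

lemma ExactColoring.le (hχ : ExactColoring n r χ) : r ≤ n := by
  calc r = #(leastOfColor n χ) := hχ.card_leastOfColor.symm
    _ ≤ #(Icc 1 n) := card_le_card (filter_subset _ _)
    _ = n := by simp

lemma ExactColoring.one_le (hχ : ExactColoring n r χ) (hr : 1 ≤ r) : 1 ≤ n := by
  obtain ⟨x, hx, -⟩ := hχ.2 1 (mem_Icc.2 ⟨le_rfl, hr⟩)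
  exact (mem_Icc.1 hx).1.trans (mem_Icc.1 hx).2

lemma color_notMem_of_mem_sdiff {A : Finset ℕ} {w : ℕ} (hA : A ⊆ (leastOfColor n χ).erase 1)
    (hw : w ∈ (leastOfColor n χ).erase 1 \ A) : χ w ∉ insert (χ 1) (A.image χ) := by
  obtain ⟨hwM, hwA⟩ := mem_sdiff.1 hw
  obtain ⟨hw1, hwL⟩ := mem_erase.1 hwM
  rw [mem_insert, mem_image, not_or, not_exists]
  have hn : 1 ≤ n := by have := mem_Icc.1 (mem_Icc_of_mem_leastOfColor hwL); omega
  exact ⟨fun h => hw1 (injOn_leastOfColor hwL (one_mem_leastOfColor hn) h), fun x ⟨hx, hxw⟩ =>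
    hwA (injOn_leastOfColor hwL (mem_of_mem_erase (hA hx)) hxw.symm ▸ hx)⟩

lemma card_insert_insert_image_of_leastOfColor {A : Finset ℕ} {w : ℕ}
    (hA : A ⊆ (leastOfColor n χ).erase 1) (hw : w ∈ (leastOfColor n χ).erase 1 \ A) :
    #(insert (χ w) (insert (χ 1) (A.image χ))) = #A + 2 := by
  have h1 : 1 ∈ leastOfColor n χ := by
    have := mem_Icc.1 (mem_Icc_of_mem_leastOfColor (mem_of_mem_erase (mem_sdiff.1 hw).1))
    exact one_mem_leastOfColor (by omega)
  have h1A : χ 1 ∉ A.image χ := fun h => by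
    obtain ⟨x, hx, hx1⟩ := mem_image.1 h
    exact (mem_erase.1 (hA hx)).1 (injOn_leastOfColor (mem_of_mem_erase (hA hx)) h1 hx1)
  rw [card_insert_of_notMem (color_notMem_of_mem_sdiff hA hw), card_insert_of_notMem h1A,
    card_image_of_injOn (injOn_leastOfColor.mono fun x hx => mem_of_mem_erase (hA hx))]


end LeastOfColor

section UpperBound

variable {m t n r : ℕ} {χ : ℕ → ℕ}

lemma Avoids.add_one_le_of_three (hm : 4 ≤ m) (hχ : ExactColoring n r χ) (hav : Avoids m 3 n χ)
    (hr : 2 ≤ r) : r + 1 ≤ m := by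
  set M := (leastOfColor n χ).erase 1
  have hMcard : #M = r - 1 := by
    rw [card_erase_of_mem (one_mem_leastOfColor (hχ.one_le (by omega))), hχ.card_leastOfColor]
  have hMne : M.Nonempty := card_pos.1 (by omega)
  set v := M.min' hMne
  have hvM : v ∈ M := min'_mem M hMne
  have hv1 : 1 ≤ v := (mem_Icc.1 (mem_Icc_of_mem_leastOfColor (mem_of_mem_erase hvM))).1
  have hsub : M.erase v ⊆ Ioc v (v + (m - 3)) := by
    intro w hw
    have hwM := mem_of_mem_erase hw
    have hwn := (mem_Icc.1 (mem_Icc_of_mem_leastOfColor (mem_of_mem_erase hwM))).2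
    have hvw : v < w := (min'_le M w hwM).lt_of_ne (ne_of_mem_erase hw).symm
    refine mem_Ioc.2 ⟨hvw, not_lt.1 fun hlt => ?_⟩
    have hlt3 := hav.card_colors_lt (A := {v}) (by simpa using hv1) (by simpa using hm)
      (y := w - v - (m - 3)) (by omega) hwn (by simp; omega)
    have h3 := card_insert_insert_image_of_leastOfColor (singleton_subset_iff.2 hvM)
      (mem_sdiff.2 ⟨hwM, by simpa using ne_of_mem_erase hw⟩)
    rw [card_singleton] at h3
    exact absurd ((card_le_card (subset_insert _ _)).trans_lt hlt3) (by omega)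
  have := card_le_card hsub
  rw [card_erase_of_mem hvM, hMcard, Nat.card_Ioc] at this
  omega

lemma Avoids.card_filter_lt_le (hav : Avoids m t n χ) (htm : t ≤ m) {A : Finset ℕ}
    (hAM : A ⊆ (leastOfColor n χ).erase 1) (hA : #A + 3 = t) :
    #(((leastOfColor n χ).erase 1 \ A).filter (m - 2 - #A + ∑ x ∈ A, x < ·)) ≤
      #((Icc 1 n).filter (χ · ∈ insert (χ 1) (A.image χ))) := by
  set θ := m - 2 - #A + ∑ x ∈ A, x
  refine card_le_card_of_injOn (· - θ) (fun w hw => ?_) (fun w hw w' hw' h => ?_)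
  · obtain ⟨hwE, hθw⟩ := mem_filter.1 (mem_coe.1 hw)
    have hwL := mem_of_mem_erase (mem_sdiff.1 hwE).1
    have hwn := mem_Icc.1 (mem_Icc_of_mem_leastOfColor hwL)
    have hy : w - θ ∈ Icc 1 n := mem_Icc.2 ⟨by omega, by omega⟩
    have hlt := hav.card_colors_lt (A := A)
      (fun x hx => (mem_Icc.1 (mem_Icc_of_mem_leastOfColor (mem_of_mem_erase (hAM hx)))).1)
      (by omega) (y := w - θ) (by omega) hwn.2 (by omega)
    have hcard := card_insert_insert_image_of_leastOfColor hAM hwE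
    have hmem : χ (w - θ) ∈ insert (χ w) (insert (χ 1) (A.image χ)) := by
      by_contra h
      rw [card_insert_of_notMem h] at hlt
      omega
    have hne : χ (w - θ) ≠ χ w := fun h => absurd (le_of_mem_leastOfColor hwL hy h) (by omega)
    exact mem_coe.2 (mem_filter.2 ⟨hy, (mem_insert.1 hmem).resolve_left hne⟩)
  · have := (mem_filter.1 (mem_coe.1 hw)).2
    have := (mem_filter.1 (mem_coe.1 hw')).2
    dsimp only at h
    omega

lemma Avoids.two_mul_card_sdiff_le (hav : Avoids m t n χ) (htm : t ≤ m) {A : Finset ℕ}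
    (hAM : A ⊆ (leastOfColor n χ).erase 1) (hA : #A + 3 = t) {v : ℕ}
    (hv : ∀ x ∈ (leastOfColor n χ).erase 1 \ A, v < x) :
    2 * #((leastOfColor n χ).erase 1 \ A) ≤ m - 2 - #A + ∑ x ∈ A, x - v + n := by
  set E := (leastOfColor n χ).erase 1 \ A
  set θ := m - 2 - #A + ∑ x ∈ A, x
  have hlow : #(E.filter (· ≤ θ)) ≤ θ - v := by
    simpa using card_le_card (t := Ioc v θ) fun w hw =>
      mem_Ioc.2 ⟨hv w (mem_filter.1 hw).1, (mem_filter.1 hw).2⟩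
  set D := (Icc 1 n).filter (χ · ∈ insert (χ 1) (A.image χ))
  have hhigh : #(E.filter (θ < ·)) ≤ #D := hav.card_filter_lt_le htm hAM hA
  have hdisj : Disjoint E D :=
    disjoint_left.2 fun w hw hwD => color_notMem_of_mem_sdiff hAM hw (mem_filter.1 hwD).2
  have hunion : E ∪ D ⊆ Icc 1 n := union_subset
    (fun w hw => mem_Icc_of_mem_leastOfColor (mem_of_mem_erase (mem_sdiff.1 hw).1))
    (filter_subset _ _)
  have hED := card_le_card hunion
  rw [card_union_of_disjoint hdisj, Nat.card_Icc] at hED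
  have hsplit := card_filter_add_card_filter_not (s := E) (fun w => w ≤ θ)
  simp only [not_le] at hsplit
  omega

lemma Avoids.mul_lt_of_four_le (hχ : ExactColoring n r χ) (hav : Avoids m t n χ) (ht : 4 ≤ t)
    (htm : t ≤ m) (hr : t - 1 ≤ r) : (t - 2) * r < weakRainbowNumerator m t n := by
  set M := (leastOfColor n χ).erase 1
  have hMcard : #M = r - 1 := by
    rw [card_erase_of_mem (one_mem_leastOfColor (hχ.one_le (by omega))), hχ.card_leastOfColor]
  obtain ⟨A, hAM, hA, hAlt⟩ := exists_subset_card_eq_forall_lt_of_mem_sdiff M (t - 3) (by omega)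
  have hAne : A.Nonempty := card_pos.1 (by omega)
  set v := A.max' hAne
  have hvA : v ∈ A := max'_mem A hAne
  have hcount := hav.two_mul_card_sdiff_le htm hAM (by omega) fun x hx => hAlt v hvA x hx
  have hE : #(M \ A) = r - 1 - (t - 3) := by rw [card_sdiff_of_subset hAM, hMcard, hA]
  set e := #(M \ A)
  have hsum := two_mul_sum_add_card_mul_card_le (K := A.erase v) (n - e - 1) fun x hx => by
    have : x + e < n := add_card_sdiff_lt_of_lt
      (fun y hy => (mem_Icc.1 (mem_Icc_of_mem_leastOfColor (mem_of_mem_erase hy))).2) hAM hAlt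
      hvA (mem_of_mem_erase hx) ((le_max' A x (mem_of_mem_erase hx)).lt_of_ne (ne_of_mem_erase hx))
    omega
  rw [card_erase_of_mem hvA, hA] at hsum
  have hsplit := sum_erase_add A id hvA
  simp only [id] at hsplit
  have hrn := hχ.le
  have hcount' : 2 * e ≤ m - t + 1 + ∑ x ∈ A.erase v, x + n := by omega
  have hT := two_mul_mul_pred_div_two t
  unfold weakRainbowNumerator
  clear_value e v M
  obtain ⟨k, rfl⟩ : ∃ k, t = k + 4 := ⟨t - 4, by omega⟩
  obtain ⟨j, rfl⟩ : ∃ j, m = j + (k + 4) := ⟨m - (k + 4), by omega⟩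
  obtain ⟨Q, rfl⟩ : ∃ Q, n = Q + e + 1 := ⟨n - e - 1, by omega⟩
  obtain ⟨rfl⟩ : r = e + k + 2 := by omega
  set T := (k + 4) * (k + 4 - 1) / 2
  simp only [show k + 4 - 1 = k + 3 by omega, show k + 4 - 2 = k + 2 by omega,
    show k + 4 - 3 = k + 1 by omega, Nat.add_sub_cancel,
    show Q + e + 1 - e - 1 = Q by omega, show T + (j + (k + 4)) - (k + 4) = T + j by omega,
    show j + (k + 4) - (k + 4) = j by omega] at hT hsum hcount' ⊢
  nlinarith

lemma Avoids.mul_lt (hm : 4 ≤ m) (ht : 3 ≤ t) (htm : t ≤ m) (hn : t * (t - 1) / 2 + m - t ≤ n)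
    (hχ : ExactColoring n r χ) (hav : Avoids m t n χ) :
    (t - 2) * r < weakRainbowNumerator m t n := by
  rcases Nat.lt_or_ge r (t - 1) with hr | hr
  · have hU : t ≤ t * (t - 1) / 2 + m - t := by have := self_le_mul_pred_div_two ht; omega
    calc (t - 2) * r ≤ (t - 2) * (t - 2) := Nat.mul_le_mul_left _ (by omega)
      _ < (t - 2) * t := Nat.mul_lt_mul_of_pos_left (by omega) (by omega)
      _ ≤ weakRainbowNumerator m t n := sub_two_mul_le_weakRainbowNumerator ht hU hn
  rcases ht.eq_or_lt with rfl | ht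
  · have := hav.add_one_le_of_three hm hχ (by omega)
    unfold weakRainbowNumerator
    omega
  · exact hav.mul_lt_of_four_le hχ ht htm hr

end UpperBound

lemma hasWeakProp_iff {m t n r : ℕ} (hm : 4 ≤ m) (ht : 3 ≤ t) (htm : t ≤ m)
    (hn : t * (t - 1) / 2 + m - t ≤ n) (hr : 1 ≤ r) :
    HasWeakProp m t n r ↔ weakRainbowNumerator m t n ≤ (t - 2) * r := by
  refine ⟨fun h => not_lt.1 fun hlt => ?_, fun h χ hχ => ?_⟩
  · have hrn : r ≤ n :=
      (Nat.lt_of_mul_lt_mul_left (hlt.trans_le (weakRainbowNumerator_le ht hn))).le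
    obtain ⟨a, ha, hcol⟩ := h _ (exactColoring_thresholdColoring hr hrn)
    exact (avoids_thresholdColoring ht htm hrn hlt a ha).not_ge hcol
  · by_contra! hav
    exact (Avoids.mul_lt hm ht htm hn hχ fun a ha => hav a ha).not_ge h

lemma cast_weakRainbowNumerator {m t n : ℕ} (ht : 3 ≤ t) :
    (weakRainbowNumerator m t n : ℚ) = ((t : ℚ) - 3) * n + t * (t - 1) / 2 + m - t := by
  have htT : t ≤ t * (t - 1) / 2 + m := (self_le_mul_pred_div_two ht).trans (Nat.le_add_right _ _)
  rw [weakRainbowNumerator, Nat.cast_add, Nat.cast_mul, Nat.cast_sub (by omega), Nat.cast_sub htT,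
    Nat.cast_add, Nat.cast_div (Nat.even_mul_pred_self t).two_dvd two_ne_zero, Nat.cast_mul,
    Nat.cast_sub (by omega)]
  push_cast
  ring

lemma isLeast_ceil_div {N d : ℕ} (hN : 0 < N) (hd : 0 < d) :
    IsLeast {r : ℕ | 1 ≤ r ∧ N ≤ d * r} ⌈(N : ℚ) / d⌉₊ := by
  have hle : ∀ r : ℕ, (N : ℚ) / d ≤ r ↔ N ≤ d * r := fun r => by
    rw [div_le_iff₀ (by exact_mod_cast hd), mul_comm]
    exact_mod_cast Iff.rfl
  refine ⟨⟨Nat.ceil_pos.2 (by positivity), (hle _).1 (Nat.le_ceil _)⟩,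
    fun r hr => Nat.ceil_le.2 ((hle r).2 hr.2)⟩

/-- For m ≥ 4, 3 ≤ t ≤ m and n ≥ t(t−1)/2 + m − t, the weakened rainbow
Schur number satisfies RS_{t,m}(n) = ⌈((t−3)n + t(t−1)/2 + m − t)/(t−2)⌉: this ceiling is
the least number of colors r ≥ 1 such that every exact r-coloring of [1,n] contains a
solution to E_m using at least t colors. -/
theorem weak_rainbow_schur_value (m t n : ℕ) (hm : 4 ≤ m) (ht : 3 ≤ t) (htm : t ≤ m)
    (hn : t * (t - 1) / 2 + m - t ≤ n) :
    ∃ R : ℕ,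
      (R : ℤ) = ⌈(((t : ℚ) - 3) * n + (t : ℚ) * ((t : ℚ) - 1) / 2 + (m : ℚ) - (t : ℚ)) /
        ((t : ℚ) - 2)⌉ ∧
      IsLeast {r : ℕ | 1 ≤ r ∧ HasWeakProp m t n r} R := by
  have hN : 0 < weakRainbowNumerator m t n := by
    have := self_le_mul_pred_div_two ht
    unfold weakRainbowNumerator
    omega
  have hd : ((t - 2 : ℕ) : ℚ) = (t : ℚ) - 2 := by rw [Nat.cast_sub (by omega)]; norm_num
  refine ⟨⌈(weakRainbowNumerator m t n : ℚ) / (t - 2 : ℕ)⌉₊, ?_, ?_⟩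
  · rw [Int.natCast_ceil_eq_ceil (by positivity), cast_weakRainbowNumerator ht, hd]
  · convert isLeast_ceil_div hN (d := t - 2) (by omega) using 1
    ext r
    exact and_congr_right fun hr => hasWeakProp_iff hm ht htm hn hr
end

section
/- Let m ≥ 4, 3 ≤ t ≤ m, and n ≥ t(t−1)/2 + m − t be integers, and set k = ⌈((t−3)n + t(t−1)/2 + m − t)/(t−2)⌉. Let α be the exact (k−1)-coloring of [1,n] with color classes C₁ = [1, n+2−k], C₂ = {n+3−k}, C₃ = {n+4−k}, ..., C_{k−1} = {n}. Then no solution x₁ + x₂ + ⋯ + x_{m-1} = x_m with all x_i ∈ [1,n] (repetitions allowed) uses at least t colors under α. Consequently RS_{t,m}(n) ≥ k. -/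
lemma sum_lb : ∀ (d : ℕ) (s : Finset ℕ) (lo : ℕ), s.card = d →
    (∀ x ∈ s, lo ≤ x) → 2 * lo * d + d * (d - 1) ≤ 2 * ∑ x ∈ s, x := by
  intro d
  induction d with
  | zero => intro s lo hcard _; simp
  | succ e ih =>
    intro s lo hcard hlo
    have hne : s.Nonempty := Finset.card_pos.mp (by omega)
    set x := s.min' hne with hx
    have hxs : x ∈ s := s.min'_mem hne
    have hrest : (s.erase x).card = e := by rw [Finset.card_erase_of_mem hxs, hcard]; omega
    have hlo' : ∀ y ∈ s.erase x, lo + 1 ≤ y := by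
      intro y hy
      have h1 : y ≠ x := Finset.ne_of_mem_erase hy
      have h2 : x ≤ y := s.min'_le y (Finset.mem_of_mem_erase hy)
      have := hlo x hxs
      omega
    have ihs := ih (s.erase x) (lo + 1) hrest hlo'
    have hsum : ∑ y ∈ s, y = x + ∑ y ∈ s.erase x, y := (Finset.add_sum_erase s id hxs).symm
    have hxlo := hlo x hxs
    rw [hsum]
    cases e with
    | zero => simp only [Nat.zero_add] at ihs ⊢; omega
    | succ f =>
      simp only [Nat.add_sub_cancel] at ihs ⊢
      nlinarith [ihs, hxlo]

lemma exact_chi (n k : ℕ) (hk2 : 2 ≤ k) (hkn : k ≤ n + 1) (hn1 : 1 ≤ n) :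
    ExactColoring n (k - 1) (fun x => if x ≤ n + 2 - k then 1 else x - (n + 1 - k)) := by
  constructor
  · intro x hx
    rw [Finset.mem_Icc] at hx ⊢
    by_cases h : x ≤ n + 2 - k
    · simp only [h, if_true]; omega
    · simp only [h, if_false]; omega
  · intro c hc
    rw [Finset.mem_Icc] at hc
    by_cases h1 : c = 1
    · refine ⟨1, by rw [Finset.mem_Icc]; omega, ?_⟩
      show (if (1:ℕ) ≤ n + 2 - k then 1 else 1 - (n + 1 - k)) = c
      rw [if_pos (by omega)]; omega
    · refine ⟨c + (n + 1 - k), by rw [Finset.mem_Icc]; omega, ?_⟩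
      show (if c + (n + 1 - k) ≤ n + 2 - k then 1 else c + (n + 1 - k) - (n + 1 - k)) = c
      rw [if_neg (by omega)]; omega

lemma colorsUsed_le (m n r : ℕ) (χ a : ℕ → ℕ)
    (hχ : ∀ x ∈ Finset.Icc 1 n, χ x ∈ Finset.Icc 1 r) (ha : IsSolutionEm m n a) :
    colorsUsed m χ a ≤ r := by
  have hsub : ((Finset.Icc 1 m).image fun i => χ (a i)) ⊆ Finset.Icc 1 r := by
    intro c hc
    obtain ⟨i, hi, rfl⟩ := Finset.mem_image.mp hc
    exact hχ _ (ha.1 i hi)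
  calc colorsUsed m χ a ≤ (Finset.Icc 1 r).card := Finset.card_le_card hsub
    _ = r := by rw [Nat.card_Icc]; omega

lemma no_big_solution (m t n k : ℕ) (ht : 3 ≤ t) (htm : t ≤ m) (hk3 : 3 ≤ k) (hkn : k ≤ n)
    (hkey : (t - 2) * (k - 1) + 1 ≤ (t - 3) * n + t * (t - 1) / 2 + (m - t)) :
    ∀ a : ℕ → ℕ, IsSolutionEm m n a →
      colorsUsed m (fun x => if x ≤ n + 2 - k then 1 else x - (n + 1 - k)) a < t := by
  obtain ⟨t', rfl⟩ : ∃ t', t = t' + 3 := ⟨t - 3, by omega⟩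
  obtain ⟨q, rfl⟩ : ∃ q, m = t' + 3 + q := ⟨m - (t' + 3), by omega⟩
  have e1 : t' + 3 - 1 = t' + 2 := by omega
  have e2 : t' + 3 - 2 = t' + 1 := by omega
  have e3 : t' + 3 - 3 = t' := by omega
  have e4 : t' + 3 + q - (t' + 3) = q := by omega
  rw [e1, e2, e3, e4] at hkey
  set A := (t' + 3) * (t' + 2) / 2 with hA
  have hA2 : 2 * A = (t' + 3) * (t' + 2) := by
    rw [hA]
    exact Nat.mul_div_cancel' (Even.two_dvd (by rw [mul_comm]; exact Nat.even_mul_succ_self (t' + 2)))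
  intro a ha
  obtain ⟨hmem, hsum⟩ := ha
  by_contra hcol
  push_neg at hcol
  set p := n + 1 - k with hp
  set M := t' + 3 + q - 1 with hM
  set χ : ℕ → ℕ := fun x => if x ≤ n + 2 - k then 1 else x - (n + 1 - k) with hχ
  set D := (Finset.Icc 1 M).image (fun i => χ (a i)) with hD
  have hIcc : Finset.Icc 1 (t' + 3 + q) = insert (t' + 3 + q) (Finset.Icc 1 M) := by
    ext x; simp only [Finset.mem_Icc, Finset.mem_insert]; omega
  have hcard1 : colorsUsed (t' + 3 + q) χ a ≤ D.card + 1 := by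
    unfold colorsUsed
    rw [hIcc, Finset.image_insert]
    exact Finset.card_insert_le _ _
  have hcard2 : t' + 1 ≤ (D.erase 1).card := by
    have h := Finset.pred_card_le_card_erase (s := D) (a := 1)
    omega
  obtain ⟨D2, hD2sub, hD2card⟩ := Finset.exists_subset_card_eq hcard2
  have hprop : ∀ c ∈ D2, 2 ≤ c ∧ ∃ i, i ∈ Finset.Icc 1 M ∧ a i = c + p := by
    intro c hc
    have hcne : c ≠ 1 := Finset.ne_of_mem_erase (hD2sub hc)
    have hcD : c ∈ D := Finset.mem_of_mem_erase (hD2sub hc)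
    rw [hD, Finset.mem_image] at hcD
    obtain ⟨i, hi, hci⟩ := hcD
    have hai : a i ∈ Finset.Icc 1 n := by
      apply hmem
      rw [Finset.mem_Icc] at hi ⊢
      omega
    rw [Finset.mem_Icc] at hai
    simp only [hχ] at hci
    by_cases hle : a i ≤ n + 2 - k
    · rw [if_pos hle] at hci; omega
    · rw [if_neg hle] at hci
      exact ⟨by omega, i, hi, by omega⟩
  have hch : ∀ c : ℕ, ∃ i, c ∈ D2 → (i ∈ Finset.Icc 1 M ∧ a i = c + p) := by
    intro c
    by_cases hc : c ∈ D2
    · obtain ⟨_, i, hi, hai⟩ := hprop c hc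
      exact ⟨i, fun _ => ⟨hi, hai⟩⟩
    · exact ⟨0, fun h => absurd h hc⟩
  choose g hg using hch
  have hinj : Set.InjOn g D2 := by
    intro c hc c' hc' hgc
    have h1 := (hg c (Finset.mem_coe.mp hc)).2
    have h2 := (hg c' (Finset.mem_coe.mp hc')).2
    rw [hgc] at h1
    omega
  set T := D2.image g with hT
  have hTsub : T ⊆ Finset.Icc 1 M := by
    intro j hj
    rw [hT, Finset.mem_image] at hj
    obtain ⟨c, hc, rfl⟩ := hj
    exact (hg c hc).1
  have hTcard : T.card = t' + 1 := by
    rw [hT, Finset.card_image_of_injOn hinj, hD2card]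
  have F2 : ∑ i ∈ T, a i = (∑ c ∈ D2, c) + (t' + 1) * p := by
    rw [hT, Finset.sum_image (fun x hx y hy h => hinj hx hy h)]
    rw [Finset.sum_congr rfl (fun c hc => (hg c hc).2)]
    rw [Finset.sum_add_distrib, Finset.sum_const, hD2card, smul_eq_mul, mul_comm]
  have F1 : ∑ i ∈ Finset.Icc 1 M \ T, a i + ∑ i ∈ T, a i = ∑ i ∈ Finset.Icc 1 M, a i :=
    Finset.sum_sdiff hTsub
  have F3 : q + 1 ≤ ∑ i ∈ Finset.Icc 1 M \ T, a i := by
    have hones : (Finset.Icc 1 M \ T).card • 1 ≤ ∑ i ∈ Finset.Icc 1 M \ T, a i := by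
      apply Finset.card_nsmul_le_sum
      intro i hi
      have hiIcc : i ∈ Finset.Icc 1 M := (Finset.mem_sdiff.mp hi).1
      have hin := hmem i (by rw [Finset.mem_Icc] at hiIcc ⊢; omega)
      rw [Finset.mem_Icc] at hin
      exact hin.1
    have hcards : (Finset.Icc 1 M \ T).card = q + 1 := by
      rw [Finset.card_sdiff_of_subset hTsub, Nat.card_Icc, hTcard]
      omega
    rw [hcards, smul_eq_mul, mul_one] at hones
    exact hones
  have F4 : ∑ i ∈ Finset.Icc 1 M, a i ≤ n := by
    rw [show Finset.Icc 1 M = Finset.Icc 1 (t' + 3 + q - 1) from rfl] at hsum ⊢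
    rw [hsum]
    have hin := hmem (t' + 3 + q) (by rw [Finset.mem_Icc]; omega)
    rw [Finset.mem_Icc] at hin
    exact hin.2
  have F5 := sum_lb (t' + 1) D2 2 hD2card (fun c hc => (hprop c hc).1)
  simp only [Nat.add_sub_cancel] at F5
  have F8 : (t' + 1) * p + (t' + 1) * (k - 1) = t' * n + n := by
    have hpk : p + (k - 1) = n := by omega
    calc (t' + 1) * p + (t' + 1) * (k - 1) = (t' + 1) * (p + (k - 1)) := by ring
      _ = (t' + 1) * n := by rw [hpk]
      _ = t' * n + n := by ring
  have F9 : (t' + 3) * (t' + 2) = (t' + 1) * t' + 4 * t' + 6 := by ring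
  linarith [F1, F2, F3, F4, F5, F8, F9, hkey, hA2]

/-- Let m ≥ 4, 3 ≤ t ≤ m, n ≥ t(t−1)/2 + m − t, and
K = ⌈((t−3)n + t(t−1)/2 + m − t)/(t−2)⌉. The coloring α with color classes
C₁ = [1, n+2−K], C₂ = {n+3−K}, …, C_{K−1} = {n} (where the element x ∈ [n+3−K, n] receives
color x − (n+1−K)) is an exact (K−1)-coloring of [1,n] under which no solution to E_m uses
at least t colors. Consequently RS_{t,m}(n) ≥ K: any number of colors r ≥ 1 such that
every exact r-coloring of [1,n] contains a solution to E_m using at least t colors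
satisfies r ≥ K. -/
theorem weak_rainbow_schur_lower (m t n K : ℕ) (hm : 4 ≤ m) (ht : 3 ≤ t) (htm : t ≤ m)
    (hn : t * (t - 1) / 2 + m - t ≤ n)
    (hK : (K : ℤ) = ⌈(((t : ℚ) - 3) * n + (t : ℚ) * ((t : ℚ) - 1) / 2 + (m : ℚ) - (t : ℚ)) /
      ((t : ℚ) - 2)⌉) :
    ExactColoring n (K - 1) (fun x => if x ≤ n + 2 - K then 1 else x - (n + 1 - K)) ∧
    (∀ a : ℕ → ℕ, IsSolutionEm m n a →
      colorsUsed m (fun x => if x ≤ n + 2 - K then 1 else x - (n + 1 - K)) a < t) ∧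
    ∀ r : ℕ, 1 ≤ r → HasWeakProp m t n r → K ≤ r := by
  obtain ⟨t', rfl⟩ : ∃ t', t = t' + 3 := ⟨t - 3, by omega⟩
  obtain ⟨q, rfl⟩ : ∃ q, m = t' + 3 + q := ⟨m - (t' + 3), by omega⟩
  have e1 : t' + 3 - 1 = t' + 2 := by omega
  rw [e1] at hn
  set A := (t' + 3) * (t' + 2) / 2 with hA
  have hA2 : 2 * A = (t' + 3) * (t' + 2) := by
    rw [hA]
    exact Nat.mul_div_cancel' (Even.two_dvd (by rw [mul_comm]; exact Nat.even_mul_succ_self (t' + 2)))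
  have hA3 : 3 ≤ A := by
    have h6 : 3 * 2 ≤ (t' + 3) * (t' + 2) := Nat.mul_le_mul (by omega) (by omega)
    linarith
  have hnq : A + q ≤ n := by omega
  obtain ⟨Nn, hNn⟩ : ∃ x, x = t' * n + A + q := ⟨_, rfl⟩
  -- cast facts
  have hAQ : (A : ℚ) * 2 = ((t' : ℚ) + 3) * ((t' : ℚ) + 2) := by
    have h := congrArg (Nat.cast : ℕ → ℚ) hA2
    push_cast at h
    linarith
  have hNq : (((t' + 3 : ℕ) : ℚ) - 3) * (n : ℚ) +
      ((t' + 3 : ℕ) : ℚ) * (((t' + 3 : ℕ) : ℚ) - 1) / 2 + ((t' + 3 + q : ℕ) : ℚ)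
      - ((t' + 3 : ℕ) : ℚ) = (Nn : ℚ) := by
    rw [hNn]
    push_cast
    linear_combination (-1/2 : ℚ) * hAQ
  have hden : ((t' + 3 : ℕ) : ℚ) - 2 = (t' : ℚ) + 1 := by push_cast; ring
  rw [hNq, hden] at hK
  have hpos : (0 : ℚ) < (t' : ℚ) + 1 := by positivity
  have hceil_ge : (Nn : ℚ) / ((t' : ℚ) + 1) ≤ (K : ℚ) := by
    have h := Int.le_ceil ((Nn : ℚ) / ((t' : ℚ) + 1))
    rw [← hK] at h
    exact_mod_cast h
  have hceil_lt : (K : ℚ) < (Nn : ℚ) / ((t' : ℚ) + 1) + 1 := by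
    have h := Int.ceil_lt_add_one ((Nn : ℚ) / ((t' : ℚ) + 1))
    rw [← hK] at h
    exact_mod_cast h
  have hup : Nn ≤ (t' + 1) * K := by
    have h : (Nn : ℚ) ≤ ((t' : ℚ) + 1) * (K : ℚ) := by
      rw [div_le_iff₀ hpos] at hceil_ge
      linarith
    exact_mod_cast h
  have hlb : (t' + 1) * (A + q) ≤ Nn := by
    have h1 : t' * (A + q) ≤ t' * n := Nat.mul_le_mul_left t' hnq
    calc (t' + 1) * (A + q) = t' * (A + q) + (A + q) := by ring
      _ ≤ t' * n + (A + q) := Nat.add_le_add_right h1 _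
      _ = t' * n + A + q := by ring
      _ = Nn := hNn.symm
  have hKA : A + q ≤ K := Nat.le_of_mul_le_mul_left (hlb.trans hup) (by omega)
  have hK1 : 1 ≤ K := by omega
  have hlow : (t' + 1) * (K - 1) < Nn := by
    have h2 : ((K : ℚ) - 1) * ((t' : ℚ) + 1) < (Nn : ℚ) := by
      rw [← lt_div_iff₀ hpos]
      linarith
    have h3 : (((t' + 1) * (K - 1) : ℕ) : ℚ) < (Nn : ℚ) := by
      push_cast [Nat.cast_sub hK1]
      linarith
    exact_mod_cast h3
  have hub : Nn ≤ (t' + 1) * n := by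
    calc Nn = t' * n + (A + q) := by rw [hNn]; ring
      _ ≤ t' * n + n := Nat.add_le_add_left hnq _
      _ = (t' + 1) * n := by ring
  have hKn : K ≤ n := by
    have := Nat.lt_of_mul_lt_mul_left (hlow.trans_le hub)
    omega
  have hkeygen : ∀ k' : ℕ, k' ≤ K →
      (t' + 3 - 2) * (k' - 1) + 1 ≤ (t' + 3 - 3) * n + (t' + 3) * (t' + 3 - 1) / 2
        + (t' + 3 + q - (t' + 3)) := by
    intro k' hk'
    have e2 : t' + 3 - 2 = t' + 1 := by omega
    have e3 : t' + 3 - 3 = t' := by omega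
    have e4 : t' + 3 + q - (t' + 3) = q := by omega
    rw [e1, e2, e3, e4, ← hA]
    have h5 : (t' + 1) * (k' - 1) ≤ (t' + 1) * (K - 1) :=
      Nat.mul_le_mul_left _ (by omega)
    have h6 : (t' + 1) * (k' - 1) < Nn := lt_of_le_of_lt h5 hlow
    rw [hNn] at h6
    omega
  refine ⟨exact_chi n K (by omega) (by omega) (by omega), ?_, ?_⟩
  · exact no_big_solution (t' + 3 + q) (t' + 3) n K (by omega) (by omega) (by omega) hKn
      (hkeygen K le_rfl)
  · intro r hr hwp
    by_contra hlt
    push_neg at hlt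
    rcases Nat.lt_or_ge r 2 with h2 | h2
    · have hr1 : r = 1 := by omega
      subst hr1
      have hex := exact_chi n 2 (by omega) (by omega) (by omega)
      have hex' : ExactColoring n 1 (fun x => if x ≤ n + 2 - 2 then 1 else x - (n + 1 - 2)) := hex
      obtain ⟨a, hsol, hcols⟩ := hwp _ hex'
      have hle := colorsUsed_le (t' + 3 + q) n 1 _ a hex'.1 hsol
      omega
    · have hsub : r + 1 ≤ K := by omega
      have hex := exact_chi n (r + 1) (by omega) (by omega) (by omega)
      have hex' : ExactColoring n r
          (fun x => if x ≤ n + 2 - (r + 1) then 1 else x - (n + 1 - (r + 1))) := hex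
      obtain ⟨a, hsol, hcols⟩ := hwp _ hex'
      have hbig := no_big_solution (t' + 3 + q) (t' + 3) n (r + 1) (by omega) (by omega)
        (by omega) (by omega) (hkeygen (r + 1) hsub) a hsol
      omega
end

section
/- For every integer n ≥ 4, every exact 4-coloring of [1,n] contains a solution x₁ + x₂ + x₃ = x₄ with x₁, x₂, x₃, x₄ ∈ [1,n] (repetitions allowed) whose entries receive at least 3 distinct colors; that is, RS_{3,4}(n) ≤ 4. -/
lemma key (n : ℕ) (hn : 4 ≤ n) (χ : ℕ → ℕ) (u v : ℕ)
    (hu : u ∈ Finset.Icc 1 n) (hv : v ∈ Finset.Icc 1 n) (huv : u + 2 ≤ v)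
    (h1u : χ 1 ≠ χ u) (h1v : χ 1 ≠ χ v) (huv' : χ u ≠ χ v) :
    ∃ a : ℕ → ℕ, IsSolutionEm 4 n a ∧ 3 ≤ colorsUsed 4 χ a := by
  simp only [Finset.mem_Icc] at hu hv
  refine ⟨fun i => if i = 1 then 1 else if i = 2 then v - u - 1 else if i = 3 then u else v,
    ⟨?_, ?_⟩, ?_⟩
  · intro i hi
    simp only [Finset.mem_Icc] at hi ⊢
    obtain ⟨hi1, hi2⟩ := hi
    interval_cases i <;> simp <;> omega
  · show ∑ i ∈ Finset.Icc 1 3, _ = _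
    rw [show Finset.Icc 1 3 = {1, 2, 3} from rfl]
    simp
    omega
  · have hsub : ({χ 1, χ u, χ v} : Finset ℕ) ⊆
        (Finset.Icc 1 4).image fun i =>
          χ (if i = 1 then 1 else if i = 2 then v - u - 1 else if i = 3 then u else v) := by
      intro c hc
      simp only [Finset.mem_insert, Finset.mem_singleton] at hc
      simp only [Finset.mem_image, Finset.mem_Icc]
      rcases hc with h | h | h
      · exact ⟨1, by omega, by simp [h.symm]⟩
      · exact ⟨3, by omega, by simp [h.symm]⟩
      · exact ⟨4, by omega, by simp [h.symm]⟩
    have hcard : ({χ 1, χ u, χ v} : Finset ℕ).card = 3 := by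
      rw [Finset.card_insert_of_notMem (by simp [h1u, h1v]),
        Finset.card_insert_of_notMem (by simp [huv'])]
      rfl
    calc 3 = ({χ 1, χ u, χ v} : Finset ℕ).card := hcard.symm
      _ ≤ _ := Finset.card_le_card hsub

lemma pick (n : ℕ) (hn : 4 ≤ n) (χ : ℕ → ℕ) (x y z : ℕ)
    (hx : x ∈ Finset.Icc 1 n) (hy : y ∈ Finset.Icc 1 n) (hz : z ∈ Finset.Icc 1 n)
    (h1x : χ 1 ≠ χ x) (h1y : χ 1 ≠ χ y) (h1z : χ 1 ≠ χ z)
    (hxy : χ x ≠ χ y) (hxz : χ x ≠ χ z) (hyz : χ y ≠ χ z) :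
    ∃ a : ℕ → ℕ, IsSolutionEm 4 n a ∧ 3 ≤ colorsUsed 4 χ a := by
  have hxy' : x ≠ y := fun h => hxy (by rw [h])
  have hxz' : x ≠ z := fun h => hxz (by rw [h])
  have hyz' : y ≠ z := fun h => hyz (by rw [h])
  rcases hxy'.lt_or_gt with h1 | h1
  · rcases hyz'.lt_or_gt with h2 | h2
    · exact key n hn χ x z hx hz (by omega) h1x h1z hxz
    · rcases hxz'.lt_or_gt with h3 | h3
      · exact key n hn χ x y hx hy (by omega) h1x h1y hxy
      · exact key n hn χ z y hz hy (by omega) h1z h1y (Ne.symm hyz)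
  · rcases hxz'.lt_or_gt with h2 | h2
    · exact key n hn χ y z hy hz (by omega) h1y h1z hyz
    · rcases hyz'.lt_or_gt with h3 | h3
      · exact key n hn χ y x hy hx (by omega) h1y h1x (Ne.symm hxy)
      · exact key n hn χ z x hz hx (by omega) h1z h1x (Ne.symm hxz)

/-- For every n ≥ 4, every exact 4-coloring of [1,n] contains a solution
x₁ + x₂ + x₃ = x₄ in [1,n] (repetitions allowed) whose entries receive at least 3 distinct
colors; that is, RS_{3,4}(n) ≤ 4. -/
theorem RS_three_four_le_four (n : ℕ) (hn : 4 ≤ n) :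
    ∀ χ : ℕ → ℕ, ExactColoring n 4 χ →
      ∃ a : ℕ → ℕ, IsSolutionEm 4 n a ∧ 3 ≤ colorsUsed 4 χ a := by
  intro χ ⟨hmap, hsurj⟩
  have h1n : (1 : ℕ) ∈ Finset.Icc 1 n := by simp; omega
  have hc1 : χ 1 ∈ Finset.Icc 1 4 := hmap 1 h1n
  simp only [Finset.mem_Icc] at hc1
  obtain ⟨x1, hx1, hcx1⟩ := hsurj 1 (by simp)
  obtain ⟨x2, hx2, hcx2⟩ := hsurj 2 (by simp)
  obtain ⟨x3, hx3, hcx3⟩ := hsurj 3 (by simp)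
  obtain ⟨x4, hx4, hcx4⟩ := hsurj 4 (by simp)
  have : χ 1 = 1 ∨ χ 1 = 2 ∨ χ 1 = 3 ∨ χ 1 = 4 := by omega
  rcases this with h | h | h | h
  · exact pick n hn χ x2 x3 x4 hx2 hx3 hx4 (by omega) (by omega) (by omega)
      (by omega) (by omega) (by omega)
  · exact pick n hn χ x1 x3 x4 hx1 hx3 hx4 (by omega) (by omega) (by omega)
      (by omega) (by omega) (by omega)
  · exact pick n hn χ x1 x2 x4 hx1 hx2 hx4 (by omega) (by omega) (by omega)
      (by omega) (by omega) (by omega)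
  · exact pick n hn χ x1 x2 x3 hx1 hx2 hx3 (by omega) (by omega) (by omega)
      (by omega) (by omega) (by omega)
end

section
/- Let m ≥ 4 and 3 ≤ t ≤ m, and let n = t(t−1)/2 + m − t. Then ⌈((t−3)n + t(t−1)/2 + m − t)/(t−2)⌉ = n, and every exact n-coloring of [1,n] (necessarily a bijection) contains a solution to E_m in [1,n] using at least t colors; consequently RS_{t,m}(n) = n. -/
open Finset

/-- Sum of the image is at most the sum of the values. -/
lemma aux_sum_image_le (s : Finset ℕ) (f : ℕ → ℕ) :
    ∑ v ∈ s.image f, v ≤ ∑ i ∈ s, f i := by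
  classical
  induction s using Finset.induction_on with
  | empty => simp
  | @insert a s ha ih =>
    rw [Finset.image_insert, Finset.sum_insert ha]
    by_cases hfa : f a ∈ s.image f
    · rw [Finset.insert_eq_self.2 hfa]
      exact ih.trans (Nat.le_add_left _ _)
    · rw [Finset.sum_insert hfa]
      exact Nat.add_le_add_left ih _

lemma aux_range_step (c : ℕ) (hc : 1 ≤ c) :
    ∑ i ∈ Finset.range c, i = ∑ i ∈ Finset.range (c - 1), i + (c - 1) := by
  conv_lhs => rw [show c = (c - 1) + 1 by omega]
  rw [Finset.sum_range_succ]

/-- Any finset of naturals of cardinality `c` has sum at least `0+1+⋯+(c-1)`. -/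
lemma aux_range_sum_le (s : Finset ℕ) :
    ∑ i ∈ Finset.range s.card, i ≤ ∑ v ∈ s, v := by
  induction s using Finset.strongInduction with
  | _ s ih =>
    rcases s.eq_empty_or_nonempty with rfl | hs
    · simp
    · have hM : s.max' hs ∈ s := s.max'_mem hs
      have h1 := ih _ (Finset.erase_ssubset hM)
      have hcard : (s.erase (s.max' hs)).card = s.card - 1 :=
        Finset.card_erase_of_mem hM
      have hc1 : 1 ≤ s.card := Finset.card_pos.2 hs
      have hMc : s.card - 1 ≤ s.max' hs := by
        have hsub : s ⊆ Finset.range (s.max' hs + 1) := fun v hv =>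
          Finset.mem_range.2 (Nat.lt_succ_of_le (Finset.le_max' s v hv))
        have := Finset.card_le_card hsub
        rw [Finset.card_range] at this; omega
      have hsplit : s.max' hs + ∑ x ∈ s.erase (s.max' hs), x = ∑ x ∈ s, x :=
        Finset.add_sum_erase s id hM
      have hr := aux_range_step s.card hc1
      rw [hcard] at h1
      omega

/-- Equality case: if the sum is minimal then the finset is `range c`. -/
lemma aux_eq_range (s : Finset ℕ) (h : ∑ v ∈ s, v ≤ ∑ i ∈ Finset.range s.card, i) :
    s = Finset.range s.card := by
  have hsub : s ⊆ Finset.range s.card := by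
    intro v hv
    by_contra hv'
    have hvc : s.card ≤ v := by
      by_contra h'; exact hv' (Finset.mem_range.2 (by omega))
    have h1 := aux_range_sum_le (s.erase v)
    have hcard : (s.erase v).card = s.card - 1 := Finset.card_erase_of_mem hv
    have hsplit : v + ∑ x ∈ s.erase v, x = ∑ x ∈ s, x := Finset.add_sum_erase s id hv
    have hc1 : 1 ≤ s.card := Finset.card_pos.2 ⟨v, hv⟩
    have hr := aux_range_step s.card hc1
    rw [hcard] at h1
    omega
  exact Finset.eq_of_subset_of_card_le hsub (by rw [Finset.card_range])

lemma aux_sum_Ioc (k : ℕ) : ∑ i ∈ Finset.Ioc 0 k, i = ∑ i ∈ Finset.range (k + 1), i := by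
  rw [Finset.range_eq_Ico, Finset.Ico_add_one_right_eq_Icc]
  refine Finset.sum_subset ?_ ?_
  · intro x hx
    rw [Finset.mem_Icc]; rw [Finset.mem_Ioc] at hx; omega
  · intro x hx hnx
    rw [Finset.mem_Icc] at hx; rw [Finset.mem_Ioc] at hnx; omega

/-- Merging the top two colors preserves the weak property. -/
lemma aux_weak_mono (m t n r : ℕ) (hr : 1 ≤ r) (h : HasWeakProp m t n r) :
    HasWeakProp m t n (r + 1) := by
  intro χ hχ
  set χ' : ℕ → ℕ := fun x => min (χ x) r with hχ'def
  have hχ' : ExactColoring n r χ' := by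
    constructor
    · intro x hx
      have := hχ.1 x hx
      rw [Finset.mem_Icc] at this ⊢
      simp only [hχ'def]
      omega
    · intro c hc
      rw [Finset.mem_Icc] at hc
      obtain ⟨x, hx, hxc⟩ := hχ.2 c (Finset.mem_Icc.2 ⟨hc.1, by omega⟩)
      exact ⟨x, hx, by simp only [hχ'def, hxc]; omega⟩
  obtain ⟨a, ha, hta⟩ := h χ' hχ'
  refine ⟨a, ha, hta.trans ?_⟩
  unfold colorsUsed
  have himg : (Finset.Icc 1 m).image (fun i => χ' (a i)) =
      ((Finset.Icc 1 m).image (fun i => χ (a i))).image (fun c => min c r) := by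
    rw [Finset.image_image]; rfl
  rw [himg]
  exact Finset.card_image_le

/-- Let m ≥ 4, 3 ≤ t ≤ m and n = t(t−1)/2 + m − t. Then
⌈((t−3)n + t(t−1)/2 + m − t)/(t−2)⌉ = n, every exact n-coloring of [1,n] contains a
solution to E_m using at least t colors, and consequently RS_{t,m}(n) = n. -/
theorem weak_rainbow_schur_base (m t n : ℕ) (hm : 4 ≤ m) (ht : 3 ≤ t) (htm : t ≤ m)
    (hn : n = t * (t - 1) / 2 + m - t) :
    ⌈(((t : ℚ) - 3) * n + (t : ℚ) * ((t : ℚ) - 1) / 2 + (m : ℚ) - (t : ℚ)) /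
        ((t : ℚ) - 2)⌉ = (n : ℤ) ∧
    (∀ χ : ℕ → ℕ, ExactColoring n n χ →
      ∃ a : ℕ → ℕ, IsSolutionEm m n a ∧ t ≤ colorsUsed m χ a) ∧
    IsLeast {r : ℕ | 1 ≤ r ∧ HasWeakProp m t n r} n := by
  -- basic arithmetic facts
  have hG2 : (∑ i ∈ Finset.range t, i) * 2 = t * (t - 1) := Finset.sum_range_id_mul_two t
  have hGn : n = ∑ i ∈ Finset.range t, i + m - t := by
    rw [hn, Finset.sum_range_id]
  have hSG1 : ∑ i ∈ Finset.range t, i = ∑ i ∈ Finset.range (t - 1), i + (t - 1) :=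
    aux_range_step t (by omega)
  have htS : t ≤ ∑ i ∈ Finset.range t, i := by
    have h2t : t * 2 ≤ t * (t - 1) := Nat.mul_le_mul_left t (by omega)
    omega
  have htn : t ≤ n := by omega
  have hn3 : 3 ≤ n := by omega
  -- Part 2 : the weak property at r = n
  have part2 : ∀ χ : ℕ → ℕ, ExactColoring n n χ →
      ∃ a : ℕ → ℕ, IsSolutionEm m n a ∧ t ≤ colorsUsed m χ a := by
    intro χ hχ
    -- χ is injective on [1,n]
    have hinj : ∀ x ∈ Finset.Icc 1 n, ∀ y ∈ Finset.Icc 1 n, χ x = χ y → x = y := by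
      intro x hx y hy hxy
      exact Finset.inj_on_of_surj_on_of_card_le (t := Finset.Icc 1 n)
        (fun a _ => χ a) (fun a ha => hχ.1 a ha)
        (fun b hb => by obtain ⟨x, hx', hx''⟩ := hχ.2 b hb; exact ⟨x, hx', hx''⟩)
        le_rfl hx hy hxy
    set a : ℕ → ℕ := fun i => if i = m then n else if i ≤ t - 1 then i else 1 with hadef
    have ham : a m = n := by simp [hadef]
    have hav : ∀ v, 1 ≤ v → v ≤ t - 1 → a v = v := by
      intro v h1 h2
      simp only [hadef]
      rw [if_neg (by omega), if_pos h2]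
    refine ⟨a, ⟨?_, ?_⟩, ?_⟩
    · -- membership
      intro i hi
      rw [Finset.mem_Icc] at hi ⊢
      simp only [hadef]
      split
      · omega
      · split <;> omega
    · -- the sum
      have hcongr : ∀ i ∈ Finset.Icc 1 (m - 1), a i = if i ≤ t - 1 then i else 1 := by
        intro i hi
        rw [Finset.mem_Icc] at hi
        simp only [hadef]
        rw [if_neg (by omega)]
      rw [Finset.sum_congr rfl hcongr, ham]
      rw [show Finset.Icc 1 (m - 1) = Finset.Ioc 0 (m - 1) from Finset.Icc_add_one_left_eq_Ioc 0 (m - 1)]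
      rw [← Finset.sum_Ioc_consecutive _ (Nat.zero_le (t - 1)) (show t - 1 ≤ m - 1 by omega)]
      have h1 : ∑ i ∈ Finset.Ioc 0 (t - 1), (if i ≤ t - 1 then i else 1) =
          ∑ i ∈ Finset.Ioc 0 (t - 1), i := by
        apply Finset.sum_congr rfl
        intro i hi
        rw [Finset.mem_Ioc] at hi
        rw [if_pos hi.2]
      have h2 : ∑ i ∈ Finset.Ioc (t - 1) (m - 1), (if i ≤ t - 1 then i else 1) =
          (m - 1) - (t - 1) := by
        have e1 : ∑ i ∈ Finset.Ioc (t - 1) (m - 1), (if i ≤ t - 1 then i else 1) =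
            ∑ _i ∈ Finset.Ioc (t - 1) (m - 1), 1 := by
          apply Finset.sum_congr rfl
          intro i hi
          rw [Finset.mem_Ioc] at hi
          rw [if_neg (by omega)]
        rw [e1, Finset.sum_const, Nat.card_Ioc, smul_eq_mul, mul_one]
      rw [h1, h2, aux_sum_Ioc, show t - 1 + 1 = t by omega]
      omega
    · -- at least t colors
      set T : Finset ℕ := insert n (Finset.Icc 1 (t - 1)) with hTdef
      have hTsub : ∀ v ∈ T, v ∈ Finset.Icc 1 n := by
        intro v hv
        rw [hTdef, Finset.mem_insert] at hv
        rw [Finset.mem_Icc]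
        rcases hv with rfl | hv
        · omega
        · rw [Finset.mem_Icc] at hv; omega
      have hTcard : T.card = t := by
        rw [hTdef, Finset.card_insert_of_notMem (by
          rw [Finset.mem_Icc]; omega), Nat.card_Icc]
        omega
      have himg : T.image χ ⊆ (Finset.Icc 1 m).image (fun i => χ (a i)) := by
        intro c hc
        obtain ⟨v, hv, rfl⟩ := Finset.mem_image.1 hc
        rw [hTdef, Finset.mem_insert] at hv
        rcases hv with rfl | hv
        · exact Finset.mem_image.2 ⟨m, Finset.mem_Icc.2 ⟨by omega, le_rfl⟩, by rw [ham]⟩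
        · rw [Finset.mem_Icc] at hv
          exact Finset.mem_image.2 ⟨v, Finset.mem_Icc.2 ⟨hv.1, by omega⟩,
            by rw [hav v hv.1 hv.2]⟩
      have hinjT : Set.InjOn χ T := by
        intro x hx y hy hxy
        exact hinj x (hTsub x (by exact_mod_cast hx)) y (hTsub y (by exact_mod_cast hy)) hxy
      calc t = T.card := hTcard.symm
        _ = (T.image χ).card := (Finset.card_image_of_injOn hinjT).symm
        _ ≤ colorsUsed m χ a := Finset.card_le_card himg
  -- Part 1 : the ceiling
  have part1 : ⌈(((t : ℚ) - 3) * n + (t : ℚ) * ((t : ℚ) - 1) / 2 + (m : ℚ) - (t : ℚ)) /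
      ((t : ℚ) - 2)⌉ = (n : ℤ) := by
    obtain ⟨P, hP⟩ : ∃ P, t * (t - 1) = P := ⟨_, rfl⟩
    rw [hP] at hG2
    have hnat : 2 * n + 2 * t = P + 2 * m := by omega
    have hPQ : (P : ℚ) = (t : ℚ) * ((t : ℚ) - 1) := by
      rw [← hP, Nat.cast_mul, Nat.cast_sub (by omega : 1 ≤ t), Nat.cast_one]
    have hq : 2 * (n : ℚ) = (t : ℚ) ^ 2 - 3 * (t : ℚ) + 2 * (m : ℚ) := by
      have := hnat
      have hcast : 2 * (n : ℚ) + 2 * (t : ℚ) = (P : ℚ) + 2 * (m : ℚ) := by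
        exact_mod_cast congrArg (fun x : ℕ => (x : ℚ)) hnat
      rw [hPQ] at hcast
      ring_nf at hcast ⊢
      linarith
    have ht2 : (t : ℚ) - 2 ≠ 0 := by
      have : (3 : ℚ) ≤ (t : ℚ) := by exact_mod_cast ht
      intro h; linarith
    have hexpr : (((t : ℚ) - 3) * n + (t : ℚ) * ((t : ℚ) - 1) / 2 + (m : ℚ) - (t : ℚ)) /
        ((t : ℚ) - 2) = (n : ℚ) := by
      rw [div_eq_iff ht2]
      ring_nf
      nlinarith [hq]
    rw [hexpr, Int.ceil_natCast]
  refine ⟨part1, part2, ⟨⟨by omega, part2⟩, ?_⟩⟩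
  -- lower bound
  rintro r ⟨hr1, hrP⟩
  by_contra hcon
  push_neg at hcon
  -- propagate the weak property up to n - 1
  have hstep : HasWeakProp m t n (n - 1) := by
    have : ∀ k, r ≤ k → HasWeakProp m t n k := by
      intro k hk
      induction k, hk using Nat.le_induction with
      | base => exact hrP
      | succ k hk ih => exact aux_weak_mono m t n k (by omega) ih
    exact this (n - 1) (by omega)
  -- the extremal coloring
  set χ₀ : ℕ → ℕ := fun x => if x = n then 2 else x with hχ₀def
  have hEC : ExactColoring n (n - 1) χ₀ := by
    constructor
    · intro x hx
      rw [Finset.mem_Icc] at hx ⊢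
      simp only [hχ₀def]
      split <;> omega
    · intro c hc
      rw [Finset.mem_Icc] at hc
      refine ⟨c, Finset.mem_Icc.2 ⟨hc.1, by omega⟩, ?_⟩
      simp only [hχ₀def]
      rw [if_neg (by omega)]
  obtain ⟨a, ⟨hmem, hsum⟩, htc⟩ := hstep χ₀ hEC
  -- analysis of the solution
  set s : Finset ℕ := Finset.Icc 1 (m - 1) with hsdef
  set W : Finset ℕ := s.image a with hWdef
  set W' : Finset ℕ := s.image (fun i => a i - 1) with hW'def
  have hsm : ∀ i ∈ s, i ∈ Finset.Icc 1 m := by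
    intro i hi
    rw [hsdef, Finset.mem_Icc] at hi
    rw [Finset.mem_Icc]; omega
  have haW : ∀ v ∈ W, 1 ≤ v ∧ v ≤ n := by
    intro v hv
    obtain ⟨i, hi, rfl⟩ := Finset.mem_image.1 hv
    have := Finset.mem_Icc.1 (hmem i (hsm i hi))
    exact this
  have hWW' : W.image (fun v => v - 1) = W' := by
    rw [hWdef, Finset.image_image, hW'def]; rfl
  have hcW' : W'.card = W.card := by
    rw [← hWW']
    apply Finset.card_image_of_injOn
    intro x hx y hy hxy
    have hx1 := (haW x (by exact_mod_cast hx)).1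
    have hy1 := (haW y (by exact_mod_cast hy)).1
    have hxy' : x - 1 = y - 1 := hxy
    omega
  have h1 : ∑ w ∈ W', w ≤ ∑ i ∈ s, (a i - 1) := by
    rw [hW'def]; exact aux_sum_image_le s _
  have h2 : ∑ i ∈ s, (a i - 1) + (m - 1) = ∑ i ∈ s, a i := by
    have hcs : s.card = m - 1 := by rw [hsdef, Nat.card_Icc]; omega
    have : ∑ i ∈ s, a i = ∑ i ∈ s, ((a i - 1) + 1) := by
      apply Finset.sum_congr rfl
      intro i hi
      have := Finset.mem_Icc.1 (hmem i (hsm i hi))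
      omega
    rw [this, Finset.sum_add_distrib, Finset.sum_const, hcs, smul_eq_mul, mul_one]
  have h3 : ∑ i ∈ Finset.range W'.card, i ≤ ∑ w ∈ W', w := aux_range_sum_le W'
  have hamIcc := Finset.mem_Icc.1 (hmem m (Finset.mem_Icc.2 ⟨by omega, le_rfl⟩))
  -- W has at most t - 1 elements
  have hWle : W.card ≤ t - 1 := by
    by_contra hWle
    push_neg at hWle
    have hrsub : Finset.range t ⊆ Finset.range W'.card := by
      apply Finset.range_subset_range.2; omega
    have h4 : ∑ i ∈ Finset.range t, i ≤ ∑ i ∈ Finset.range W'.card, i :=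
      Finset.sum_le_sum_of_subset hrsub
    omega
  -- the colors used are contained in insert (χ₀ (a m)) (W.image χ₀)
  have hVsub : (Finset.Icc 1 m).image (fun i => χ₀ (a i)) ⊆
      insert (χ₀ (a m)) (W.image χ₀) := by
    intro c hc
    obtain ⟨i, hi, rfl⟩ := Finset.mem_image.1 hc
    rw [Finset.mem_Icc] at hi
    by_cases him : i = m
    · subst him; exact Finset.mem_insert_self _ _
    · refine Finset.mem_insert_of_mem (Finset.mem_image.2 ?_)
      exact ⟨a i, Finset.mem_image.2 ⟨i, Finset.mem_Icc.2 ⟨hi.1, by omega⟩, rfl⟩, rfl⟩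
  have htc2 : t ≤ 1 + W.card := by
    calc t ≤ colorsUsed m χ₀ a := htc
      _ ≤ (insert (χ₀ (a m)) (W.image χ₀)).card := Finset.card_le_card hVsub
      _ ≤ 1 + (W.image χ₀).card := by
          rw [add_comm]; exact Finset.card_insert_le _ _
      _ ≤ 1 + W.card := by
          exact Nat.add_le_add_left Finset.card_image_le _
  have hWcard : W.card = t - 1 := by omega
  -- equality analysis
  have hW'card : W'.card = t - 1 := by omega
  have hamn : a m = n := by
    rw [hW'card] at h3
    omega
  have hW'min : ∑ w ∈ W', w ≤ ∑ i ∈ Finset.range W'.card, i := by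
    rw [hW'card]
    omega
  have hW'eq : W' = Finset.range (t - 1) := by
    have := aux_eq_range W' hW'min
    rwa [hW'card] at this
  have hWsub : W ⊆ Finset.Icc 1 (t - 1) := by
    intro v hv
    have h1v := haW v hv
    have : v - 1 ∈ W' := by
      rw [← hWW']
      exact Finset.mem_image.2 ⟨v, hv, rfl⟩
    rw [hW'eq, Finset.mem_range] at this
    rw [Finset.mem_Icc]; omega
  have hWeq : W = Finset.Icc 1 (t - 1) :=
    Finset.eq_of_subset_of_card_le hWsub (by rw [Nat.card_Icc, hWcard]; omega)
  -- compute the image of the colors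
  have hχ₀W : W.image χ₀ = W := by
    have : W.image χ₀ = W.image id := by
      apply Finset.image_congr
      intro v hv
      have hv' := hWsub (by exact_mod_cast hv)
      rw [Finset.mem_Icc] at hv'
      simp only [hχ₀def, id]
      rw [if_neg (by omega)]
    rw [this, Finset.image_id]
  have h2W : χ₀ (a m) ∈ W := by
    rw [hamn]
    simp only [hχ₀def, if_pos rfl]
    rw [hWeq, Finset.mem_Icc]; omega
  have hfinal : (insert (χ₀ (a m)) (W.image χ₀)).card = t - 1 := by
    rw [hχ₀W, Finset.insert_eq_self.2 h2W, hWcard]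
  have : t ≤ t - 1 := by
    calc t ≤ colorsUsed m χ₀ a := htc
      _ ≤ (insert (χ₀ (a m)) (W.image χ₀)).card := Finset.card_le_card hVsub
      _ = t - 1 := hfinal
  omega
end
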